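/- arXiv:math/0409069 — 8 statements merged into one kernel-verified Lean document; each statement's English description precedes it below -/
import Mathlib

section
/- Let X ⊆ ℝ (with the subspace topology). Then X satisfies Ufin(O,Γ) (the Hurewicz property) if, and only if, every continuous image of X in the Baire space ℕ^ℕ is bounded with respect to ≤*. -/
open Filter Set

/-- `f ≤* g`: `f n ≤ g n` for all but finitely many `n`. -/
def LeStar (f g : ℕ → ℕ) : Prop := ∀ᶠ n in Filter.atTop, f n ≤ g n

/-- A subset of Baire space is bounded if it has a `≤*`-upper bound. -/
def BddFam (B : Set (ℕ → ℕ)) : Prop := ∃ g : ℕ → ℕ, ∀ f ∈ B, LeStar f g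

/-- A subset of Baire space is dominating if every function is `≤*` below some member. -/
def DominatingFam (D : Set (ℕ → ℕ)) : Prop := ∀ g : ℕ → ℕ, ∃ f ∈ D, LeStar g f

/-- An open cover of a topological space. -/
def IsOpenCover {X : Type*} [TopologicalSpace X] (𝒰 : Set (Set X)) : Prop :=
  (∀ U ∈ 𝒰, IsOpen U) ∧ ⋃₀ 𝒰 = Set.univ

/-- The cover `𝒰` contains a finite subcover. -/
def HasFinSubcover {X : Type*} (𝒰 : Set (Set X)) : Prop :=
  ∃ ℱ ⊆ 𝒰, ℱ.Finite ∧ ⋃₀ ℱ = Set.univ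

/-- The Hurewicz property `Ufin(O,Γ)`. -/
def UfinOGamma (X : Type*) [TopologicalSpace X] : Prop :=
  ∀ 𝒰 : ℕ → Set (Set X),
    (∀ n, IsOpenCover (𝒰 n)) → (∀ n, ¬ HasFinSubcover (𝒰 n)) →
    ∃ ℱ : ℕ → Set (Set X),
      (∀ n, ℱ n ⊆ 𝒰 n ∧ (ℱ n).Finite) ∧
      ∀ x : X, ∀ᶠ n in Filter.atTop, x ∈ ⋃₀ ℱ n

/-!
Forward direction: for continuous `Ψ`, the sublevel sets `{x | Ψ x n ≤ k}` form an increasing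
open cover for each `n`, so a finite subfamily is contained in a single sublevel set, and the
Hurewicz property turns these levels into a `≤*`-bound.

Backward direction: the interior points of `X ⊆ ℝ` form a σ-compact set, which a compact
exhaustion handles. Cutting `X` at the nearest points of `ℝ \ X` on either side of a point gives
a clopen neighbourhood of it whose non-interior points lie in at most three members of a given
cover. By Lindelöf, countably many such clopen sets cover `X`, and the index of the first one
containing `x` is continuous in `x`. Bounding these indices for all covers at once by one
continuous map into Baire space tells how many pieces to take from the `n`-th cover.
-/

open Topology

section Forward

variable {X : Type*}

theorem exists_bound_of_subset_range_sublevel {f : X → ℕ} {ℱ : Set (Set X)}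
    (hℱ : ℱ ⊆ range fun k => {x | f x ≤ k}) (hfin : ℱ.Finite) :
    ∃ K, ∀ x ∈ ⋃₀ ℱ, f x ≤ K := by
  choose k hk using fun U : ℱ => hℱ U.2
  have : Finite ℱ := hfin
  obtain ⟨K, hK⟩ := (finite_range k).bddAbove
  refine ⟨K, fun x ⟨U, hU, hxU⟩ => ?_⟩
  have hxk : f x ≤ k ⟨U, hU⟩ := (congrArg (x ∈ ·) (hk ⟨U, hU⟩)).mpr hxU
  exact hxk.trans (hK ⟨⟨U, hU⟩, rfl⟩)

theorem not_hasFinSubcover_range_sublevel {f : X → ℕ} (hf : ¬BddAbove (range f)) :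
    ¬HasFinSubcover (range fun k => {x | f x ≤ k}) := by
  rintro ⟨ℱ, hℱ, hfin, hcov⟩
  obtain ⟨K, hK⟩ := exists_bound_of_subset_range_sublevel hℱ hfin
  exact hf ⟨K, by rintro _ ⟨x, rfl⟩; exact hK x (hcov ▸ mem_univ x)⟩

variable [TopologicalSpace X]

theorem isOpenCover_range_sublevel {f : X → ℕ} (hf : Continuous f) :
    IsOpenCover (range fun k => {x | f x ≤ k}) := by
  refine ⟨?_, eq_univ_of_forall fun x => ⟨_, ⟨f x, rfl⟩, le_refl (f x)⟩⟩
  rintro _ ⟨k, rfl⟩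
  exact (isOpen_discrete (Iic k)).preimage hf

theorem UfinOGamma.exists_eventually_le (h : UfinOGamma X) {f : ℕ → X → ℕ}
    (hf : ∀ n, Continuous (f n)) (hunb : ∀ n, ¬BddAbove (range (f n))) :
    ∃ g : ℕ → ℕ, ∀ x, ∀ᶠ n in atTop, f n x ≤ g n := by
  obtain ⟨ℱ, hℱ, hcov⟩ := h _ (fun n => isOpenCover_range_sublevel (hf n))
    (fun n => not_hasFinSubcover_range_sublevel (hunb n))
  choose g hg using fun n => exists_bound_of_subset_range_sublevel (hℱ n).1 (hℱ n).2
  exact ⟨g, fun x => (hcov x).mono fun n hn => hg n x hn⟩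

theorem UfinOGamma.bddFam_range (h : UfinOGamma X) {Ψ : X → ℕ → ℕ} (hΨ : Continuous Ψ) :
    BddFam (range Ψ) := by
  by_cases hbdd : ∀ n, BddAbove (range fun x => Ψ x n)
  · choose g hg using hbdd
    exact ⟨g, by rintro _ ⟨x, rfl⟩; exact Eventually.of_forall fun n => hg n ⟨x, rfl⟩⟩
  push Not at hbdd
  obtain ⟨n₀, hn₀⟩ := hbdd
  -- A bounded coordinate gives a cover with a finite subcover, which `UfinOGamma` excludes:
  -- taking the maximum with the unbounded coordinate `n₀` makes every coordinate unbounded.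
  obtain ⟨g, hg⟩ := h.exists_eventually_le (f := fun n x => max (Ψ x n) (Ψ x n₀))
    (fun n => ((continuous_apply n).comp hΨ).max ((continuous_apply n₀).comp hΨ))
    (fun n ⟨B, hB⟩ => hn₀ ⟨B, by
      rintro _ ⟨x, rfl⟩
      exact (le_max_right _ _).trans (hB ⟨x, rfl⟩)⟩)
  exact ⟨g, by rintro _ ⟨x, rfl⟩; exact (hg x).mono fun n hn => (le_max_left _ _).trans hn⟩

end Forward

section Backward

variable {X : Type*} [TopologicalSpace X]

theorem IsOpenCover.exists_mem {𝒰 : Set (Set X)} (h𝒰 : IsOpenCover 𝒰) (x : X) : ∃ U ∈ 𝒰, x ∈ U :=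
  mem_sUnion.1 (h𝒰.2 ▸ mem_univ x)

theorem IsOpenCover.exists_finite_subset_of_isCompact {𝒰 : Set (Set X)} (h𝒰 : IsOpenCover 𝒰)
    {K : Set X} (hK : IsCompact K) : ∃ ℱ ⊆ 𝒰, ℱ.Finite ∧ K ⊆ ⋃₀ ℱ := by
  obtain ⟨ℱ, hℱ, hfin, hcov⟩ := hK.elim_finite_subcover_image (c := id) h𝒰.1
    (by simp [← sUnion_eq_biUnion, h𝒰.2])
  exact ⟨ℱ, hℱ, hfin, by simpa [← sUnion_eq_biUnion] using hcov⟩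

theorem IsSigmaCompact.exists_eventually_mem_sUnion {Y : Set X} (hY : IsSigmaCompact Y)
    {𝒰 : ℕ → Set (Set X)} (h𝒰 : ∀ n, IsOpenCover (𝒰 n)) :
    ∃ ℱ : ℕ → Set (Set X), (∀ n, ℱ n ⊆ 𝒰 n ∧ (ℱ n).Finite) ∧
      ∀ y ∈ Y, ∀ᶠ n in atTop, y ∈ ⋃₀ ℱ n := by
  obtain ⟨K, hK, rfl⟩ := hY
  choose ℱ hℱ hfin hcov using fun n =>
    (h𝒰 n).exists_finite_subset_of_isCompact (isCompact_accumulate hK n)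
  refine ⟨ℱ, fun n => ⟨hℱ n, hfin n⟩, fun y hy => ?_⟩
  obtain ⟨i, hi⟩ := mem_iUnion.1 hy
  exact eventually_atTop.2 ⟨i, fun n hn => hcov n (mem_accumulate.2 ⟨i, hn, hi⟩)⟩

theorem exists_continuous_mem_of_isClopen {C : ℕ → Set X} (hC : ∀ k, IsClopen (C k))
    (hcov : ∀ x, ∃ k, x ∈ C k) : ∃ F : X → ℕ, Continuous F ∧ ∀ x, x ∈ C (F x) := by
  classical
  refine ⟨fun x => Nat.find (hcov x), continuous_discrete_rng.2 fun k => ?_,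
    fun x => Nat.find_spec (hcov x)⟩
  have : (fun x => Nat.find (hcov x)) ⁻¹' {k} = C k ∩ ⋂ i ∈ Finset.range k, (C i)ᶜ := by
    ext x
    simp [Nat.find_eq_iff]
  rw [this]
  exact (hC k).isOpen.inter (isOpen_biInter_finset fun i _ => (hC i).compl.isOpen)

theorem exists_continuous_index_finite_subcover [SecondCountableTopology X] {Z : Set X}
    {𝒰 : Set (Set X)} (h : ∀ x, ∃ C, IsClopen C ∧ x ∈ C ∧ ∃ W ⊆ 𝒰, W.Finite ∧ C ∩ Z ⊆ ⋃₀ W) :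
    ∃ F : X → ℕ, Continuous F ∧ ∃ W : ℕ → Set (Set X),
      (∀ k, W k ⊆ 𝒰 ∧ (W k).Finite) ∧ ∀ x ∈ Z, x ∈ ⋃₀ W (F x) := by
  set 𝒮 := {C | IsClopen C ∧ ∃ W ⊆ 𝒰, W.Finite ∧ C ∩ Z ⊆ ⋃₀ W}
  obtain ⟨T, hTc, hT𝒮, hTcov⟩ :=
    TopologicalSpace.isOpen_sUnion_countable 𝒮 fun C hC => hC.1.isOpen
  have hempty : ∅ ∈ 𝒮 := ⟨isClopen_empty, ∅, empty_subset _, finite_empty, by simp⟩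
  obtain ⟨C, hC⟩ := (hTc.insert ∅).exists_eq_range (insert_nonempty _ _)
  have hC𝒮 : ∀ k, C k ∈ 𝒮 := fun k => insert_subset hempty hT𝒮 (hC ▸ mem_range_self k)
  choose W hW𝒰 hWfin hW using fun k => (hC𝒮 k).2
  obtain ⟨F, hF, hFC⟩ := exists_continuous_mem_of_isClopen (fun k => (hC𝒮 k).1) fun x => by
    obtain ⟨D, hD, hxD⟩ : x ∈ ⋃₀ T := by
      obtain ⟨D, hD, hxD, hD𝒮⟩ := h x
      exact hTcov ▸ ⟨D, ⟨hD, hD𝒮⟩, hxD⟩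
    obtain ⟨k, rfl⟩ : D ∈ range C := hC ▸ mem_insert_of_mem _ hD
    exact ⟨k, hxD⟩
  exact ⟨F, hF, W, fun k => ⟨hW𝒰 k, hWfin k⟩, fun x hx => hW (F x) ⟨hFC x, hx⟩⟩

theorem ufinOGamma_of_bddFam_range [SecondCountableTopology X] {Y : Set X}
    (hY : IsSigmaCompact Y)
    (hloc : ∀ 𝒰, IsOpenCover 𝒰 → ∀ x,
      ∃ C, IsClopen C ∧ x ∈ C ∧ ∃ W ⊆ 𝒰, W.Finite ∧ C ∩ Yᶜ ⊆ ⋃₀ W)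
    (H : ∀ Ψ : X → ℕ → ℕ, Continuous Ψ → BddFam (range Ψ)) : UfinOGamma X := by
  intro 𝒰 h𝒰 _
  obtain ⟨ℱ, hℱ, hYcov⟩ := hY.exists_eventually_mem_sUnion h𝒰
  choose F hF W hW hWcov using fun n => exists_continuous_index_finite_subcover (hloc (𝒰 n) (h𝒰 n))
  obtain ⟨g, hg⟩ := H (fun x n => F n x) (continuous_pi hF)
  refine ⟨fun n => ℱ n ∪ ⋃ k ∈ Iic (g n), W n k, fun n => ⟨?_, ?_⟩, fun x => ?_⟩
  · exact union_subset (hℱ n).1 (iUnion₂_subset fun k _ => (hW n k).1)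
  · exact (hℱ n).2.union ((finite_Iic _).biUnion fun k _ => (hW n k).2)
  by_cases hx : x ∈ Y
  · exact (hYcov x hx).mono fun n hn => sUnion_mono subset_union_left hn
  · refine Eventually.mono (hg _ ⟨x, rfl⟩) fun n hn => ?_
    have hW : W n (F n x) ⊆ ⋃ k ∈ Iic (g n), W n k :=
      subset_biUnion_of_mem (u := fun k => W n k) (show F n x ∈ Iic (g n) from hn)
    exact sUnion_mono (hW.trans subset_union_right) (hWcov n x hx)

end Backward

section Order

variable {α : Type*} [ConditionallyCompleteLinearOrder α] [TopologicalSpace α] [OrderTopology α]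
  {X : Set α}

theorem isClopen_setOf_val_lt {v : α} (hv : v ∉ X) : IsClopen {y : X | (y : α) < v} := by
  have : {y : X | (y : α) < v} = Subtype.val ⁻¹' Iic v := by
    ext y
    exact ⟨le_of_lt, fun h => h.lt_of_ne fun he => hv (he ▸ y.2)⟩
  exact ⟨this ▸ isClosed_Iic.preimage continuous_subtype_val,
    isOpen_Iio.preimage continuous_subtype_val⟩

theorem IsOpenCover.exists_isClopen_right {𝒰 : Set (Set X)} (h𝒰 : IsOpenCover 𝒰) (x : X) :
    ∃ C : Set X, IsClopen C ∧ {y : X | (y : α) ≤ x} ⊆ C ∧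
      ∃ U ∈ 𝒰, ∀ y ∈ C, (x : α) < y → (y : α) ∉ interior X → y ∈ U := by
  obtain ⟨U₀, hU₀, -⟩ := h𝒰.exists_mem x
  set T := {t | (x : α) < t ∧ t ∉ X}
  rcases T.eq_empty_or_nonempty with hT | hT
  · have hint : Ioi (x : α) ⊆ interior X :=
      interior_maximal (fun t ht => by_contra fun htX => hT.subset ⟨ht, htX⟩) isOpen_Ioi
    exact ⟨univ, isClopen_univ, subset_univ _, U₀, hU₀, fun y _ hxy hy => (hy (hint hxy)).elim⟩
  have hTbdd : BddBelow T := ⟨x, fun t ht => ht.1.le⟩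
  have hint : Ioo (x : α) (sInf T) ⊆ interior X :=
    interior_maximal (fun t ht => by_contra fun htX => (csInf_le hTbdd ⟨ht.1, htX⟩).not_gt ht.2)
      isOpen_Ioo
  -- Cutting `X` at a point `t ∉ X` gives a clopen set.
  suffices ∃ t ∉ X, (x : α) < t ∧ ∃ U ∈ 𝒰, ∀ y : X, sInf T ≤ y → (y : α) < t → y ∈ U by
    obtain ⟨t, htX, hxt, U, hU, hUt⟩ := this
    refine ⟨_, isClopen_setOf_val_lt htX, fun y hy => lt_of_le_of_lt hy hxt, U, hU,
      fun y hyt hxy hy => hUt y (not_lt.1 fun h => hy (hint ⟨hxy, h⟩)) hyt⟩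
  by_cases hβ : sInf T ∈ X
  · obtain ⟨U, hU, hβU⟩ := h𝒰.exists_mem ⟨sInf T, hβ⟩
    obtain ⟨O, hO, hOU⟩ := (mem_nhds_subtype X _ U).1 ((h𝒰.1 U hU).mem_nhds hβU)
    obtain ⟨t₀, ht₀⟩ := hT
    obtain ⟨u, hβu, hu⟩ := exists_Ico_subset_of_mem_nhds hO
      ⟨t₀, (csInf_le hTbdd ht₀).lt_of_ne fun he => ht₀.2 (he ▸ hβ)⟩
    obtain ⟨t, ⟨hxt, htX⟩, htu⟩ := exists_lt_of_csInf_lt ⟨t₀, ht₀⟩ hβu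
    exact ⟨t, htX, hxt, U, hU, fun y hβy hyt => hOU (hu ⟨hβy, hyt.trans htu⟩)⟩
  · exact ⟨sInf T, hβ, (le_csInf hT fun t ht => ht.1.le).lt_of_ne fun he => hβ (he ▸ x.2),
      U₀, hU₀, fun y hβy hyt => (hβy.not_gt hyt).elim⟩

theorem IsOpenCover.exists_isClopen_left {𝒰 : Set (Set X)} (h𝒰 : IsOpenCover 𝒰) (x : X) :
    ∃ C : Set X, IsClopen C ∧ {y : X | (x : α) ≤ y} ⊆ C ∧
      ∃ U ∈ 𝒰, ∀ y ∈ C, (y : α) < x → (y : α) ∉ interior X → y ∈ U :=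
  IsOpenCover.exists_isClopen_right (α := αᵒᵈ) h𝒰 x

theorem IsOpenCover.exists_isClopen_finite_cover_compl_interior {𝒰 : Set (Set X)}
    (h𝒰 : IsOpenCover 𝒰) (x : X) :
    ∃ C, IsClopen C ∧ x ∈ C ∧ ∃ W ⊆ 𝒰, W.Finite ∧ C ∩ (Subtype.val ⁻¹' interior X)ᶜ ⊆ ⋃₀ W := by
  obtain ⟨Cl, hCl, hxCl, Ul, hUl, hl⟩ := h𝒰.exists_isClopen_left x
  obtain ⟨Cr, hCr, hxCr, Ur, hUr, hr⟩ := h𝒰.exists_isClopen_right x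
  obtain ⟨U, hU, hxU⟩ := h𝒰.exists_mem x
  refine ⟨Cl ∩ Cr, hCl.inter hCr, ⟨hxCl le_rfl, hxCr le_rfl⟩, {Ul, U, Ur},
    insert_subset hUl (insert_subset hU (singleton_subset_iff.2 hUr)), toFinite _, ?_⟩
  rintro y ⟨⟨hyl, hyr⟩, hy⟩
  rcases lt_trichotomy (y : α) x with h | h | h
  · exact ⟨Ul, by simp, hl y hyl h hy⟩
  · exact ⟨U, by simp, Subtype.ext h ▸ hxU⟩
  · exact ⟨Ur, by simp, hr y hyr h hy⟩

end Order

theorem isSigmaCompact_preimage_val_interior {α : Type*} [TopologicalSpace α]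
    [LocallyCompactSpace α] [SecondCountableTopology α] (X : Set α) :
    IsSigmaCompact (Subtype.val ⁻¹' interior X : Set X) := by
  rw [Subtype.isSigmaCompact_iff, image_preimage_eq_inter_range, Subtype.range_coe,
    inter_eq_left.2 interior_subset, isSigmaCompact_iff_sigmaCompactSpace]
  have := isOpen_interior (s := X).locallyCompactSpace
  infer_instance

/-- Hurewicz' theorem: a set of reals satisfies `Ufin(O,Γ)` iff all of its continuous
images in the Baire space are bounded. -/
theorem hurewicz_characterization (X : Set ℝ) :
    UfinOGamma X ↔ ∀ Ψ : X → (ℕ → ℕ), Continuous Ψ → BddFam (Set.range Ψ) :=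
  ⟨fun h _ hΨ => h.bddFam_range hΨ,
    ufinOGamma_of_bddFam_range (isSigmaCompact_preimage_val_interior X)
      fun _ h𝒰 => h𝒰.exists_isClopen_finite_cover_compl_interior⟩
end

section
/- Let X ⊆ ℝ (with the subspace topology). Then X satisfies Ufin(O,O) (the Menger property) if, and only if, no continuous image of X in the Baire space ℕ^ℕ is dominating. -/
open Filter Set

/-- The Menger property `Ufin(O,O)`. -/
def UfinOO (X : Type*) [TopologicalSpace X] : Prop :=
  ∀ 𝒰 : ℕ → Set (Set X),
    (∀ n, IsOpenCover (𝒰 n)) → (∀ n, ¬ HasFinSubcover (𝒰 n)) →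
    ∃ ℱ : ℕ → Set (Set X),
      (∀ n, ℱ n ⊆ 𝒰 n ∧ (ℱ n).Finite) ∧
      (⋃ n, ⋃₀ ℱ n) = Set.univ

/-- One-sided abutting points of `X`. -/
def Eab (X : Set ℝ) : Set ℝ :=
  {e : ℝ | e ∈ X ∧ e ∉ interior X ∧
    ((∃ b, e < b ∧ Set.Ioo e b ⊆ X) ∨ (∃ a, a < e ∧ Set.Ioo a e ⊆ X))}

lemma countable_right (X : Set ℝ) :
    {e : ℝ | e ∈ X ∧ e ∉ interior X ∧ ∃ b, e < b ∧ Ioo e b ⊆ X}.Countable := by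
  classical
  set R := {e : ℝ | e ∈ X ∧ e ∉ interior X ∧ ∃ b, e < b ∧ Ioo e b ⊆ X} with hR
  have hsel : ∀ e : R, ∃ q : ℚ, e.1 < (q:ℝ) ∧ Ioo e.1 ((q:ℚ):ℝ) ⊆ X := by
    rintro ⟨e, he, hni, b, hb, hsub⟩
    obtain ⟨q, hq1, hq2⟩ := exists_rat_btwn hb
    exact ⟨q, hq1, fun y hy => hsub ⟨hy.1, hy.2.trans hq2⟩⟩
  choose q hq1 hq2 using hsel
  have hinj : Function.Injective q := by
    intro e e' heq
    by_contra hne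
    have hne' : e.1 ≠ e'.1 := fun h => hne (Subtype.ext h)
    rcases hne'.lt_or_gt with h | h
    · have hmem : e'.1 ∈ Ioo e.1 ((q e : ℚ):ℝ) := ⟨h, heq ▸ hq1 e'⟩
      have : e'.1 ∈ interior X := mem_interior.mpr ⟨_, hq2 e, isOpen_Ioo, hmem⟩
      exact e'.2.2.1 this
    · have hmem : e.1 ∈ Ioo e'.1 ((q e' : ℚ):ℝ) := ⟨h, heq ▸ hq1 e⟩
      have : e.1 ∈ interior X := mem_interior.mpr ⟨_, hq2 e', isOpen_Ioo, hmem⟩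
      exact e.2.2.1 this
  exact Set.countable_coe_iff.mp (hinj.countable)

lemma countable_left (X : Set ℝ) :
    {e : ℝ | e ∈ X ∧ e ∉ interior X ∧ ∃ a, a < e ∧ Ioo a e ⊆ X}.Countable := by
  classical
  set R := {e : ℝ | e ∈ X ∧ e ∉ interior X ∧ ∃ a, a < e ∧ Ioo a e ⊆ X} with hR
  have hsel : ∀ e : R, ∃ q : ℚ, (q:ℝ) < e.1 ∧ Ioo ((q:ℚ):ℝ) e.1 ⊆ X := by
    rintro ⟨e, he, hni, a, ha, hsub⟩
    obtain ⟨q, hq1, hq2⟩ := exists_rat_btwn ha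
    exact ⟨q, hq2, fun y hy => hsub ⟨hq1.trans hy.1, hy.2⟩⟩
  choose q hq1 hq2 using hsel
  have hinj : Function.Injective q := by
    intro e e' heq
    by_contra hne
    have hne' : e.1 ≠ e'.1 := fun h => hne (Subtype.ext h)
    rcases hne'.lt_or_gt with h | h
    · have hmem : e.1 ∈ Ioo ((q e' : ℚ):ℝ) e'.1 := ⟨heq ▸ hq1 e, h⟩
      have : e.1 ∈ interior X := mem_interior.mpr ⟨_, hq2 e', isOpen_Ioo, hmem⟩
      exact e.2.2.1 this
    · have hmem : e'.1 ∈ Ioo ((q e : ℚ):ℝ) e.1 := ⟨heq ▸ hq1 e', h⟩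
      have : e'.1 ∈ interior X := mem_interior.mpr ⟨_, hq2 e, isOpen_Ioo, hmem⟩
      exact e'.2.2.1 this
  exact Set.countable_coe_iff.mp (hinj.countable)

lemma Eab_countable (X : Set ℝ) : (Eab X).Countable := by
  refine Set.Countable.mono ?_ ((countable_right X).union (countable_left X))
  rintro e ⟨he, hni, hd⟩
  rcases hd with h | h
  · exact Or.inl ⟨he, hni, h⟩
  · exact Or.inr ⟨he, hni, h⟩

lemma zcore_free_right (X : Set ℝ) (z : ℝ) (hz : z ∈ X \ (interior X ∪ Eab X)) :
    ∀ ε, 0 < ε → ∃ b, z < b ∧ b < z + ε ∧ b ∉ X := by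
  intro ε hε
  by_contra hcon
  push_neg at hcon
  have hsub : Ioo z (z + ε) ⊆ X := fun y hy => hcon y hy.1 hy.2
  have hzE : z ∈ Eab X :=
    ⟨hz.1, fun hi => hz.2 (Set.mem_union_left _ hi), Or.inl ⟨z + ε, by linarith, hsub⟩⟩
  exact hz.2 (Set.mem_union_right _ hzE)

lemma zcore_free_left (X : Set ℝ) (z : ℝ) (hz : z ∈ X \ (interior X ∪ Eab X)) :
    ∀ ε, 0 < ε → ∃ a, z - ε < a ∧ a < z ∧ a ∉ X := by
  intro ε hε
  by_contra hcon
  push_neg at hcon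
  have hsub : Ioo (z - ε) z ⊆ X := fun y hy => hcon y hy.1 hy.2
  have hzE : z ∈ Eab X :=
    ⟨hz.1, fun hi => hz.2 (Set.mem_union_left _ hi), Or.inr ⟨z - ε, by linarith, hsub⟩⟩
  exact hz.2 (Set.mem_union_right _ hzE)

lemma cutRight (X : Set ℝ) (η : ℝ → ℝ) (hη : ∀ e ∈ Eab X, 0 < η e) (x : ℝ)
    (hx : x ∈ interior X ∪ Eab X) :
    ∃ R : Set ℝ, ((R = Ioi x) ∨ ∃ b, x < b ∧ b ∉ X ∧ R = Ioo x b) ∧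
      X ∩ R ⊆ interior X ∪ Eab X ∪ ⋃ e ∈ Eab X, Metric.ball e (η e) := by
  classical
  set Q := {t : ℝ | x < t ∧ Ioo x t ⊆ X} with hQdef
  by_cases hQb : BddAbove Q
  · by_cases hQn : Q.Nonempty
    · set r := sSup Q with hrdef
      obtain ⟨t0, ht0⟩ := hQn
      have hxr : x < r := lt_of_lt_of_le ht0.1 (le_csSup hQb ht0)
      have hIoo : Ioo x r ⊆ X := by
        intro y hy
        obtain ⟨t, htQ, hyt⟩ := exists_lt_of_lt_csSup ⟨t0, ht0⟩ hy.2
        exact htQ.2 ⟨hy.1, hyt⟩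
      have hIooV : Ioo x r ⊆ interior X := interior_maximal hIoo isOpen_Ioo
      by_cases hrX : r ∈ X
      · have hrnotint : r ∉ interior X := by
          intro hri
          obtain ⟨ε, hε, hball⟩ := Metric.isOpen_iff.mp isOpen_interior r hri
          have hmem : (r + ε/2) ∈ Q := by
            refine ⟨by linarith, ?_⟩
            intro y hy
            rcases lt_or_ge y r with hc | hc
            · exact hIoo ⟨hy.1, hc⟩
            · refine interior_subset (hball ?_)
              rw [Metric.mem_ball, Real.dist_eq, abs_lt]
              constructor
              · linarith [hy.2]
              · linarith [hy.2]
          have := le_csSup hQb hmem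
          linarith
        have hrE : r ∈ Eab X := ⟨hrX, hrnotint, Or.inr ⟨x, hxr, hIoo⟩⟩
        have hfree : ¬ (Ioo r (r + η r) ⊆ X) := by
          intro hsub
          have hmem : (r + η r) ∈ Q := by
            refine ⟨by have := hη r hrE; linarith, ?_⟩
            intro y hy
            rcases lt_trichotomy y r with hc | hc | hc
            · exact hIoo ⟨hy.1, hc⟩
            · exact hc ▸ hrX
            · exact hsub ⟨hc, hy.2⟩
          have := le_csSup hQb hmem
          have := hη r hrE
          linarith
        obtain ⟨b, hb, hbX⟩ := Set.not_subset.mp hfree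
        refine ⟨Ioo x b, Or.inr ⟨b, lt_trans hxr hb.1, hbX, rfl⟩, ?_⟩
        rintro y ⟨hyX, hy1, hy2⟩
        rcases lt_trichotomy y r with hc | hc | hc
        · exact Or.inl (Or.inl (hIooV ⟨hy1, hc⟩))
        · exact Or.inl (Or.inr (hc ▸ hrE))
        · refine Or.inr (mem_biUnion hrE ?_)
          rw [Metric.mem_ball, Real.dist_eq, abs_lt]
          constructor
          · have := hη r hrE; linarith
          · linarith [hb.2]
      · refine ⟨Ioo x r, Or.inr ⟨r, hxr, hrX, rfl⟩, ?_⟩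
        rintro y ⟨hyX, hy⟩
        exact Or.inl (Or.inl (hIooV hy))
    · have hxint : x ∉ interior X := by
        intro hxi
        obtain ⟨ε, hε, hball⟩ := Metric.isOpen_iff.mp isOpen_interior x hxi
        refine hQn ⟨x + ε/2, by linarith, ?_⟩
        intro y hy
        refine interior_subset (hball ?_)
        rw [Metric.mem_ball, Real.dist_eq, abs_lt]
        exact ⟨by linarith [hy.1], by linarith [hy.2]⟩
      have hxE : x ∈ Eab X := by
        rcases hx with h | h
        · exact absurd h hxint
        · exact h
      have hfree : ¬ (Ioo x (x + η x) ⊆ X) := by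
        intro hsub
        exact hQn ⟨x + η x, by have := hη x hxE; linarith, hsub⟩
      obtain ⟨b, hb, hbX⟩ := Set.not_subset.mp hfree
      refine ⟨Ioo x b, Or.inr ⟨b, hb.1, hbX, rfl⟩, ?_⟩
      rintro y ⟨hyX, hy1, hy2⟩
      refine Or.inr (mem_biUnion hxE ?_)
      rw [Metric.mem_ball, Real.dist_eq, abs_lt]
      constructor
      · have := hη x hxE; linarith
      · linarith [hb.2]
  · have hIoi : Ioi x ⊆ X := by
      intro y hy
      obtain ⟨t, htQ, hyt⟩ := not_bddAbove_iff.mp hQb y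
      exact htQ.2 ⟨hy, hyt⟩
    refine ⟨Ioi x, Or.inl rfl, ?_⟩
    rintro y ⟨hyX, hy⟩
    exact Or.inl (Or.inl (interior_maximal hIoi isOpen_Ioi hy))

lemma cutLeft (X : Set ℝ) (η : ℝ → ℝ) (hη : ∀ e ∈ Eab X, 0 < η e) (x : ℝ)
    (hx : x ∈ interior X ∪ Eab X) :
    ∃ L : Set ℝ, ((L = Iio x) ∨ ∃ a, a < x ∧ a ∉ X ∧ L = Ioo a x) ∧
      X ∩ L ⊆ interior X ∪ Eab X ∪ ⋃ e ∈ Eab X, Metric.ball e (η e) := by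
  classical
  set Q := {t : ℝ | t < x ∧ Ioo t x ⊆ X} with hQdef
  by_cases hQb : BddBelow Q
  · by_cases hQn : Q.Nonempty
    · set r := sInf Q with hrdef
      obtain ⟨t0, ht0⟩ := hQn
      have hxr : r < x := lt_of_le_of_lt (csInf_le hQb ht0) ht0.1
      have hIoo : Ioo r x ⊆ X := by
        intro y hy
        obtain ⟨t, htQ, hyt⟩ := exists_lt_of_csInf_lt ⟨t0, ht0⟩ hy.1
        exact htQ.2 ⟨hyt, hy.2⟩
      have hIooV : Ioo r x ⊆ interior X := interior_maximal hIoo isOpen_Ioo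
      by_cases hrX : r ∈ X
      · have hrnotint : r ∉ interior X := by
          intro hri
          obtain ⟨ε, hε, hball⟩ := Metric.isOpen_iff.mp isOpen_interior r hri
          have hmem : (r - ε/2) ∈ Q := by
            refine ⟨by linarith, ?_⟩
            intro y hy
            rcases lt_or_ge r y with hc | hc
            · exact hIoo ⟨hc, hy.2⟩
            · refine interior_subset (hball ?_)
              rw [Metric.mem_ball, Real.dist_eq, abs_lt]
              constructor
              · linarith [hy.1]
              · linarith [hy.1]
          have := csInf_le hQb hmem
          linarith
        have hrE : r ∈ Eab X := ⟨hrX, hrnotint, Or.inl ⟨x, hxr, hIoo⟩⟩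
        have hfree : ¬ (Ioo (r - η r) r ⊆ X) := by
          intro hsub
          have hmem : (r - η r) ∈ Q := by
            refine ⟨by have := hη r hrE; linarith, ?_⟩
            intro y hy
            rcases lt_trichotomy y r with hc | hc | hc
            · exact hsub ⟨hy.1, hc⟩
            · exact hc ▸ hrX
            · exact hIoo ⟨hc, hy.2⟩
          have := csInf_le hQb hmem
          have := hη r hrE
          linarith
        obtain ⟨a, ha, haX⟩ := Set.not_subset.mp hfree
        refine ⟨Ioo a x, Or.inr ⟨a, lt_trans ha.2 hxr, haX, rfl⟩, ?_⟩
        rintro y ⟨hyX, hy1, hy2⟩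
        rcases lt_trichotomy y r with hc | hc | hc
        · refine Or.inr (mem_biUnion hrE ?_)
          rw [Metric.mem_ball, Real.dist_eq, abs_lt]
          constructor
          · linarith [ha.1]
          · have := hη r hrE; linarith
        · exact Or.inl (Or.inr (hc ▸ hrE))
        · exact Or.inl (Or.inl (hIooV ⟨hc, hy2⟩))
      · refine ⟨Ioo r x, Or.inr ⟨r, hxr, hrX, rfl⟩, ?_⟩
        rintro y ⟨hyX, hy⟩
        exact Or.inl (Or.inl (hIooV hy))
    · have hxint : x ∉ interior X := by
        intro hxi
        obtain ⟨ε, hε, hball⟩ := Metric.isOpen_iff.mp isOpen_interior x hxi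
        refine hQn ⟨x - ε/2, by linarith, ?_⟩
        intro y hy
        refine interior_subset (hball ?_)
        rw [Metric.mem_ball, Real.dist_eq, abs_lt]
        exact ⟨by linarith [hy.1], by linarith [hy.2]⟩
      have hxE : x ∈ Eab X := by
        rcases hx with h | h
        · exact absurd h hxint
        · exact h
      have hfree : ¬ (Ioo (x - η x) x ⊆ X) := by
        intro hsub
        exact hQn ⟨x - η x, by have := hη x hxE; linarith, hsub⟩
      obtain ⟨a, ha, haX⟩ := Set.not_subset.mp hfree
      refine ⟨Ioo a x, Or.inr ⟨a, ha.2, haX, rfl⟩, ?_⟩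
      rintro y ⟨hyX, hy1, hy2⟩
      refine Or.inr (mem_biUnion hxE ?_)
      rw [Metric.mem_ball, Real.dist_eq, abs_lt]
      constructor
      · linarith [ha.1]
      · have := hη x hxE; linarith
  · have hIio : Iio x ⊆ X := by
      intro y hy
      obtain ⟨t, htQ, hyt⟩ := not_bddBelow_iff.mp hQb y
      exact htQ.2 ⟨hyt, hy⟩
    refine ⟨Iio x, Or.inl rfl, ?_⟩
    rintro y ⟨hyX, hy⟩
    exact Or.inl (Or.inl (interior_maximal hIio isOpen_Iio hy))

lemma goodNbhd (X : Set ℝ) (η : ℝ → ℝ) (hη : ∀ e ∈ Eab X, 0 < η e) (x : ℝ)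
    (hx : x ∈ interior X ∪ Eab X) :
    ∃ G : Set ℝ, IsOpen G ∧ (X ∩ closure G ⊆ G) ∧ x ∈ G ∧
      X ∩ G ⊆ interior X ∪ Eab X ∪ ⋃ e ∈ Eab X, Metric.ball e (η e) := by
  obtain ⟨R, hRs, hRtr⟩ := cutRight X η hη x hx
  obtain ⟨L, hLs, hLtr⟩ := cutLeft X η hη x hx
  rcases hRs with hR | ⟨b, hxb, hbX, hR⟩ <;> rcases hLs with hL | ⟨a, hax, haX, hL⟩
  · refine ⟨univ, isOpen_univ, by simp, mem_univ x, ?_⟩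
    rintro y ⟨hyX, -⟩
    rcases lt_trichotomy y x with hc | hc | hc
    · exact hLtr ⟨hyX, hL ▸ hc⟩
    · exact Or.inl (hc ▸ hx)
    · exact hRtr ⟨hyX, hR ▸ hc⟩
  · refine ⟨Ioi a, isOpen_Ioi, ?_, hax, ?_⟩
    · rintro y ⟨hyX, hy⟩
      rw [closure_Ioi] at hy
      rcases eq_or_lt_of_le (mem_Ici.mp hy) with rfl | hy'
      · exact absurd hyX haX
      · exact hy'
    · rintro y ⟨hyX, hy⟩
      rcases lt_trichotomy y x with hc | hc | hc
      · exact hLtr ⟨hyX, hL ▸ ⟨hy, hc⟩⟩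
      · exact Or.inl (hc ▸ hx)
      · exact hRtr ⟨hyX, hR ▸ hc⟩
  · refine ⟨Iio b, isOpen_Iio, ?_, hxb, ?_⟩
    · rintro y ⟨hyX, hy⟩
      rw [closure_Iio] at hy
      rcases eq_or_lt_of_le (mem_Iic.mp hy) with heq | hy'
      · exact absurd (heq ▸ hyX) hbX
      · exact hy'
    · rintro y ⟨hyX, hy⟩
      rcases lt_trichotomy y x with hc | hc | hc
      · exact hLtr ⟨hyX, hL ▸ hc⟩
      · exact Or.inl (hc ▸ hx)
      · exact hRtr ⟨hyX, hR ▸ ⟨hc, hy⟩⟩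
  · refine ⟨Ioo a b, isOpen_Ioo, ?_, ⟨hax, hxb⟩, ?_⟩
    · rintro y ⟨hyX, hy⟩
      rw [closure_Ioo (by linarith : a ≠ b)] at hy
      constructor
      · rcases eq_or_lt_of_le hy.1 with rfl | hy'
        · exact absurd hyX haX
        · exact hy'
      · rcases eq_or_lt_of_le hy.2 with heq | hy'
        · exact absurd (heq ▸ hyX) hbX
        · exact hy'
    · rintro y ⟨hyX, hy⟩
      rcases lt_trichotomy y x with hc | hc | hc
      · exact hLtr ⟨hyX, hL ▸ ⟨hy.1, hc⟩⟩
      · exact Or.inl (hc ▸ hx)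
      · exact hRtr ⟨hyX, hR ▸ ⟨hc, hy.2⟩⟩

lemma enum_family {P : Set ℝ → Prop} (hP : P ∅)
    {A : Set ℝ} (hcov : ∀ x ∈ A, ∃ G, P G ∧ IsOpen G ∧ x ∈ G) :
    ∃ f : ℕ → Set ℝ, (∀ j, P (f j) ∧ IsOpen (f j)) ∧ A ⊆ ⋃ j, f j := by
  obtain ⟨T, hTc, hTsub, hTu⟩ := TopologicalSpace.isOpen_sUnion_countable
      {G : Set ℝ | P G ∧ IsOpen G} (fun s hs => hs.2)
  have hT' : (insert (∅ : Set ℝ) T).Countable := hTc.insert ∅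
  obtain ⟨f, hf⟩ := hT'.exists_eq_range (insert_nonempty _ _)
  refine ⟨f, ?_, ?_⟩
  · intro j
    have hmem : f j ∈ insert (∅ : Set ℝ) T := hf ▸ mem_range_self j
    rcases mem_insert_iff.mp hmem with h | h
    · rw [h]; exact ⟨hP, isOpen_empty⟩
    · exact ⟨(hTsub h).1, (hTsub h).2⟩
  · intro x hx
    obtain ⟨G, hPG, hGopen, hxG⟩ := hcov x hx
    have hxT : x ∈ ⋃₀ T := by
      rw [hTu]
      exact ⟨G, ⟨hPG, hGopen⟩, hxG⟩
    obtain ⟨G', hG'T, hxG'⟩ := hxT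
    have : G' ∈ range f := hf ▸ mem_insert_of_mem _ hG'T
    obtain ⟨j, hj⟩ := this
    exact mem_iUnion.mpr ⟨j, hj ▸ hxG'⟩

theorem forward_dir (X : Set ℝ) (hX : UfinOO X) :
    ∀ Ψ : X → (ℕ → ℕ), Continuous Ψ → ¬ DominatingFam (Set.range Ψ) := by
  classical
  intro Ψ hΨ hD
  set 𝒟 : ℕ → Set (Set X) := fun m => Set.range (fun k : ℕ => {x : X | Ψ x m ≤ k}) with h𝒟
  have hDopen : ∀ m k : ℕ, IsOpen {x : X | Ψ x m ≤ k} := by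
    intro m k
    have hco : Continuous fun x : X => Ψ x m := (continuous_apply m).comp hΨ
    have heq : {x : X | Ψ x m ≤ k} = (fun x : X => Ψ x m) ⁻¹' (Set.Iic k) := rfl
    rw [heq]
    exact (isOpen_discrete _).preimage hco
  have hDcover : ∀ m, IsOpenCover (𝒟 m) := by
    intro m
    constructor
    · rintro U ⟨k, rfl⟩
      exact hDopen m k
    · apply eq_univ_of_forall
      intro x
      exact ⟨{y : X | Ψ y m ≤ Ψ x m}, ⟨Ψ x m, rfl⟩, (by simp : x ∈ {y : X | Ψ y m ≤ Ψ x m})⟩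
  have hbound : ∀ (m : ℕ) (ℱ : Set (Set X)), ℱ ⊆ 𝒟 m → ℱ.Finite →
      ∃ K, ⋃₀ ℱ ⊆ {x : X | Ψ x m ≤ K} := by
    intro m ℱ hsub hfin
    have hsel : ∀ F : Set X, ∃ k, F ∈ ℱ → F = {x : X | Ψ x m ≤ k} := by
      intro F
      by_cases hF : F ∈ ℱ
      · obtain ⟨k, hk⟩ := hsub hF
        exact ⟨k, fun _ => hk.symm⟩
      · exact ⟨0, fun h => absurd h hF⟩
    choose kf hkf using hsel
    obtain ⟨K, hK⟩ := (hfin.image kf).bddAbove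
    refine ⟨K, ?_⟩
    rintro x ⟨F, hF, hxF⟩
    have hFeq := hkf F hF
    have hx : Ψ x m ≤ kf F := by rw [hFeq] at hxF; exact hxF
    exact le_trans hx (hK (mem_image_of_mem kf hF))
  set A : Set ℕ := {m | ∃ K, ∀ x : X, Ψ x m ≤ K} with hA
  have hAfin : A.Finite := by
    by_contra hinf
    have hAinf : A.Infinite := hinf
    have hKA : ∀ m, ∃ K, m ∈ A → ∀ x : X, Ψ x m ≤ K := by
      intro m
      by_cases hm : m ∈ A
      · obtain ⟨K, hK⟩ := hm
        exact ⟨K, fun _ => hK⟩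
      · exact ⟨0, fun h => absurd h hm⟩
    choose KA hKA' using hKA
    obtain ⟨f, hfr, hle⟩ := hD (fun m => KA m + 1)
    obtain ⟨x, rfl⟩ := hfr
    have hle' : ∀ᶠ n in Filter.atTop, KA n + 1 ≤ Ψ x n := hle
    obtain ⟨M, hM⟩ := Filter.eventually_atTop.mp hle'
    obtain ⟨m, hmA, hmM⟩ := hAinf.exists_gt M
    have h1 := hM m (le_of_lt hmM)
    have h2 := hKA' m hmA x
    omega
  obtain ⟨N0, hN0⟩ := hAfin.bddAbove
  set N := N0 + 1 with hN
  have hnofin : ∀ m, N ≤ m → ¬ HasFinSubcover (𝒟 m) := by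
    rintro m hm ⟨ℱ, hsub, hfin, hcov⟩
    obtain ⟨K, hK⟩ := hbound m ℱ hsub hfin
    have hmA : m ∈ A := ⟨K, fun x => hK (hcov ▸ mem_univ x)⟩
    have := hN0 hmA
    omega
  have happ : ∀ j : ℕ, ∃ ℱ : ℕ → Set (Set X),
      (∀ n, ℱ n ⊆ 𝒟 (N + Nat.pair j n) ∧ (ℱ n).Finite) ∧ (⋃ n, ⋃₀ ℱ n) = univ := by
    intro j
    exact hX (fun n => 𝒟 (N + Nat.pair j n)) (fun n => hDcover _)
      (fun n => hnofin _ (Nat.le_add_right N _))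
  choose ℱ hℱ1 hℱ2 using happ
  have hKselx : ∀ j n, ∃ K, ⋃₀ ℱ j n ⊆ {x : X | Ψ x (N + Nat.pair j n) ≤ K} :=
    fun j n => hbound _ _ (hℱ1 j n).1 (hℱ1 j n).2
  choose K hK using hKselx
  obtain ⟨f, hfr, hle⟩ := hD (fun m => if N ≤ m then K (m - N).unpair.1 (m - N).unpair.2 + 1 else 0)
  obtain ⟨x, rfl⟩ := hfr
  have hle' : ∀ᶠ m in Filter.atTop,
      (if N ≤ m then K (m - N).unpair.1 (m - N).unpair.2 + 1 else 0) ≤ Ψ x m := hle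
  obtain ⟨M, hM⟩ := Filter.eventually_atTop.mp hle'
  have hxcov : x ∈ ⋃ n, ⋃₀ ℱ M n := (hℱ2 M) ▸ mem_univ x
  obtain ⟨n, hn⟩ := mem_iUnion.mp hxcov
  have h1 : Ψ x (N + Nat.pair M n) ≤ K M n := hK M n hn
  have hm0 : M ≤ N + Nat.pair M n := le_trans (Nat.left_le_pair M n) (Nat.le_add_left _ _)
  have h2 := hM _ hm0
  rw [if_pos (Nat.le_add_right N _)] at h2
  rw [Nat.add_sub_cancel_left, Nat.unpair_pair] at h2
  have h2' : K M n + 1 ≤ Ψ x (N + Nat.pair M n) := h2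
  omega

theorem backward_dir (X : Set ℝ)
    (h : ∀ Ψ : X → (ℕ → ℕ), Continuous Ψ → ¬ DominatingFam (Set.range Ψ)) :
    UfinOO X := by
  classical
  intro 𝒰 hcov _hnofin
  rcases eq_empty_or_nonempty X with hXe | hne
  · refine ⟨fun _ => ∅, fun n => ⟨empty_subset _, finite_empty⟩, ?_⟩
    apply eq_univ_of_forall
    rintro ⟨x, hx⟩
    rw [hXe] at hx
    exact absurd hx (notMem_empty x)
  -- enumeration of the abutting points
  obtain ⟨c, hc⟩ : ∃ c : ℕ → ℝ, Eab X ⊆ Set.range c := by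
    rcases eq_empty_or_nonempty (Eab X) with hE | hEne
    · exact ⟨fun _ => 0, by rw [hE]; exact empty_subset _⟩
    · obtain ⟨f, hf⟩ := (Eab_countable X).exists_eq_range hEne
      exact ⟨f, hf.le⟩
  -- reserved members of the covers 𝒰 (3p+2)
  have hpick : ∀ p : ℕ, ∃ (U : Set X) (η : ℝ), 0 < η ∧
      (c p ∈ Eab X → U ∈ 𝒰 (3 * p + 2) ∧
        ∀ y (hy : y ∈ X), |y - c p| < η → (⟨y, hy⟩ : X) ∈ U) := by
    intro p
    by_cases hp : c p ∈ Eab X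
    · have hcX : c p ∈ X := hp.1
      have hmem : (⟨c p, hcX⟩ : X) ∈ ⋃₀ 𝒰 (3 * p + 2) := by
        rw [(hcov _).2]; exact mem_univ _
      obtain ⟨U, hU𝒰, hU⟩ := hmem
      obtain ⟨ε, hε, hball⟩ := Metric.isOpen_iff.mp ((hcov _).1 U hU𝒰) _ hU
      refine ⟨U, ε, hε, fun _ => ⟨hU𝒰, ?_⟩⟩
      intro y hy hlt
      apply hball
      rw [Metric.mem_ball, Subtype.dist_eq, Real.dist_eq]
      exact hlt
    · exact ⟨∅, 1, one_pos, fun hp' => absurd hp' hp⟩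
  choose Upick ηpick hηpos hUpick using hpick
  -- point-level radii
  have hpEex : ∀ e : ℝ, ∃ p : ℕ, e ∈ Eab X → c p = e := by
    intro e
    by_cases he : e ∈ Eab X
    · obtain ⟨p, hp⟩ := hc he
      exact ⟨p, fun _ => hp⟩
    · exact ⟨0, fun he' => absurd he' he⟩
  choose pE hpEc using hpEex
  set ηpt : ℝ → ℝ := fun e => ηpick (pE e) with hηpt
  have hηptpos : ∀ e ∈ Eab X, 0 < ηpt e := fun e _ => hηpos _
  have hSplcov : ∀ y (hy : y ∈ X), y ∈ (⋃ e ∈ Eab X, Metric.ball e (ηpt e)) →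
      ∃ p, c p ∈ Eab X ∧ (⟨y, hy⟩ : X) ∈ Upick p := by
    intro y hy hySpl
    obtain ⟨e, heE, hyball⟩ := mem_iUnion₂.mp hySpl
    have hce : c (pE e) = e := hpEc e heE
    have hceE : c (pE e) ∈ Eab X := by rw [hce]; exact heE
    refine ⟨pE e, hceE, ?_⟩
    apply (hUpick (pE e) hceE).2
    rw [hce]
    rw [Metric.mem_ball, Real.dist_eq] at hyball
    exact hyball
  -- the 'G' family: good neighborhoods for interior and abutting points
  obtain ⟨Gs, hGsP, hGscov⟩ := enum_family
      (P := fun G => (X ∩ closure G ⊆ G) ∧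
        X ∩ G ⊆ interior X ∪ Eab X ∪ ⋃ e ∈ Eab X, Metric.ball e (ηpt e))
      ⟨by simp, by simp⟩
      (A := interior X ∪ Eab X)
      (fun x hx => by
        obtain ⟨G, hGopen, hGgood, hxG, hGtr⟩ := goodNbhd X ηpt hηptpos x hx
        exact ⟨G, ⟨hGgood, hGtr⟩, hGopen, hxG⟩)
  have hGsgood : ∀ j, X ∩ closure (Gs j) ⊆ Gs j := fun j => (hGsP j).1.1
  have hGsopen : ∀ j, IsOpen (Gs j) := fun j => (hGsP j).2
  have hGstr : ∀ j, X ∩ Gs j ⊆ interior X ∪ Eab X ∪ ⋃ e ∈ Eab X, Metric.ball e (ηpt e) :=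
    fun j => (hGsP j).1.2
  -- the 'I' families: refinements of 𝒰 (3n) around core points
  have hIex : ∀ n : ℕ, ∃ I : ℕ → Set ℝ,
      (∀ i, ((X ∩ closure (I i) ⊆ I i) ∧
        ∃ U ∈ 𝒰 (3 * n), ∀ y (hy : y ∈ X), y ∈ I i → (⟨y, hy⟩ : X) ∈ U) ∧ IsOpen (I i)) ∧
      (X \ (interior X ∪ Eab X)) ⊆ ⋃ i, I i := by
    intro n
    have hUne : ∃ U, U ∈ 𝒰 (3 * n) := by
      obtain ⟨x, hx⟩ := hne
      have hmem : (⟨x, hx⟩ : X) ∈ ⋃₀ 𝒰 (3 * n) := by rw [(hcov _).2]; exact mem_univ _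
      obtain ⟨U, hU, _⟩ := hmem
      exact ⟨U, hU⟩
    obtain ⟨U0, hU0⟩ := hUne
    refine enum_family
      (P := fun I => (X ∩ closure I ⊆ I) ∧
        ∃ U ∈ 𝒰 (3 * n), ∀ y (hy : y ∈ X), y ∈ I → (⟨y, hy⟩ : X) ∈ U)
      (A := X \ (interior X ∪ Eab X)) ?_ ?_
    · exact ⟨by simp, U0, hU0, fun y hy hmem => absurd hmem (notMem_empty y)⟩
    · intro z hz
      have hzX : z ∈ X := hz.1
      have hmem : (⟨z, hzX⟩ : X) ∈ ⋃₀ 𝒰 (3 * n) := by rw [(hcov _).2]; exact mem_univ _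
      obtain ⟨U, hU𝒰, hU⟩ := hmem
      obtain ⟨ε, hε, hball⟩ := Metric.isOpen_iff.mp ((hcov _).1 U hU𝒰) _ hU
      obtain ⟨a, ha1, ha2, haX⟩ := zcore_free_left X z hz ε hε
      obtain ⟨b, hb1, hb2, hbX⟩ := zcore_free_right X z hz ε hε
      refine ⟨Ioo a b, ⟨?_, U, hU𝒰, ?_⟩, isOpen_Ioo, ha2, hb1⟩
      · intro y hy
        rw [closure_Ioo (by linarith : a ≠ b)] at hy
        obtain ⟨hyX, hy1, hy2⟩ := hy
        constructor
        · rcases eq_or_lt_of_le hy1 with rfl | hlt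
          · exact absurd hyX haX
          · exact hlt
        · rcases eq_or_lt_of_le hy2 with heq | hlt
          · exact absurd (heq ▸ hyX) hbX
          · exact hlt
      · intro y hy hyI
        apply hball
        rw [Metric.mem_ball, Subtype.dist_eq, Real.dist_eq, abs_lt]
        constructor
        · linarith [hyI.1]
        · linarith [hyI.2]
  choose Iseq hIseqP hIseqcov using hIex
  have hIgood : ∀ n i, X ∩ closure (Iseq n i) ⊆ Iseq n i := fun n i => ((hIseqP n) i).1.1
  have hIopen : ∀ n i, IsOpen (Iseq n i) := fun n i => ((hIseqP n) i).2
  have hIpar : ∀ n i, ∃ U ∈ 𝒰 (3 * n), ∀ y (hy : y ∈ X), y ∈ Iseq n i → (⟨y, hy⟩ : X) ∈ U :=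
    fun n i => ((hIseqP n) i).1.2
  choose Upar hUparm hUpart using hIpar
  -- the chains W
  set W : ℕ → ℕ → Set ℝ := fun n k => ⋃ i ∈ Set.Iic k, (Iseq n i ∪ Gs i) with hW
  have hWopen : ∀ n k, IsOpen (W n k) :=
    fun n k => isOpen_biUnion fun i _ => (hIopen n i).union (hGsopen i)
  have hWgood : ∀ n k, X ∩ closure (W n k) ⊆ W n k := by
    intro n k
    rintro y ⟨hyX, hycl⟩
    rw [(Set.finite_Iic k).closure_biUnion] at hycl
    obtain ⟨i, hik, hyi⟩ := mem_iUnion₂.mp hycl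
    rw [closure_union] at hyi
    rcases hyi with hcase | hcase
    · exact mem_biUnion hik (Or.inl (hIgood n i ⟨hyX, hcase⟩))
    · exact mem_biUnion hik (Or.inr (hGsgood i ⟨hyX, hcase⟩))
  have hWmono : ∀ n k k', k ≤ k' → W n k ⊆ W n k' :=
    fun n k k' hkk => biUnion_subset_biUnion_left (Iic_subset_Iic.mpr hkk)
  have hWtot : ∀ (x : X) (n : ℕ), ∃ k, (x : ℝ) ∈ W n k := by
    intro x n
    by_cases hz : (x : ℝ) ∈ X \ (interior X ∪ Eab X)
    · obtain ⟨i, hi⟩ := mem_iUnion.mp (hIseqcov n hz)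
      exact ⟨i, mem_biUnion (mem_Iic.mpr le_rfl) (Or.inl hi)⟩
    · have hxe : (x : ℝ) ∈ interior X ∪ Eab X := by
        by_contra hcon
        exact hz ⟨x.2, hcon⟩
      obtain ⟨j, hj⟩ := mem_iUnion.mp (hGscov hxe)
      exact ⟨j, mem_biUnion (mem_Iic.mpr le_rfl) (Or.inr hj)⟩
  set Ψ : X → ℕ → ℕ := fun x n => Nat.find (hWtot x n) with hΨdef
  have hΨspec : ∀ (x : X) (n : ℕ), (x : ℝ) ∈ W n (Ψ x n) := fun x n => Nat.find_spec (hWtot x n)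
  have hpreopen : ∀ n k, IsOpen ((fun x : X => (x : ℝ)) ⁻¹' (W n k)) :=
    fun n k => (hWopen n k).preimage continuous_subtype_val
  have hpreclosed : ∀ n k, IsClosed ((fun x : X => (x : ℝ)) ⁻¹' (W n k)) := by
    intro n k
    have heq : ((fun x : X => (x : ℝ)) ⁻¹' (W n k)) =
        ((fun x : X => (x : ℝ)) ⁻¹' (closure (W n k))) := by
      ext x
      constructor
      · exact fun hx => subset_closure hx
      · exact fun hx => hWgood n k ⟨x.2, hx⟩
    rw [heq]
    exact isClosed_closure.preimage continuous_subtype_val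
  have hΨcont : Continuous Ψ := by
    apply continuous_pi
    intro n
    apply IsLocallyConstant.continuous
    rw [IsLocallyConstant.iff_isOpen_fiber]
    intro k
    have heq : (fun x : X => Ψ x n) ⁻¹' {k} =
        ((fun x : X => (x : ℝ)) ⁻¹' (W n k)) ∩
          ⋂ i ∈ Finset.range k, ((fun x : X => (x : ℝ)) ⁻¹' (W n i))ᶜ := by
      ext x
      simp only [mem_preimage, mem_singleton_iff, mem_inter_iff, mem_iInter, mem_compl_iff,
        Finset.mem_range, hΨdef]
      rw [Nat.find_eq_iff]
    rw [heq]
    exact (hpreopen n k).inter (isOpen_biInter_finset fun i _ => (hpreclosed n i).isOpen_compl)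
  -- use non-domination
  have hdom := h Ψ hΨcont
  rw [DominatingFam] at hdom
  push_neg at hdom
  obtain ⟨g, hg⟩ := hdom
  have hgx : ∀ x : X, ∃ n, Ψ x n < g n := by
    intro x
    have h1 : ¬ LeStar g (Ψ x) := hg (Ψ x) ⟨x, rfl⟩
    have h2 : ∃ᶠ n in Filter.atTop, ¬ g n ≤ Ψ x n := Filter.not_eventually.mp h1
    obtain ⟨n, hn⟩ := h2.exists
    exact ⟨n, not_le.mp hn⟩
  -- compact pieces for interior ∪ Eab
  set Kc : ℕ → Set ℝ := fun i =>
    (Icc (-(i : ℝ)) i \ Metric.thickening (1 / (i + 1)) (interior X)ᶜ) ∪ (Eab X ∩ {c i}) with hKc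
  have hKcX : ∀ i, Kc i ⊆ X := by
    intro i y hy
    rcases hy with ⟨hy1, hy2⟩ | ⟨hy1, _⟩
    · have hyint : y ∈ interior X := by
        by_contra hyV
        exact hy2 (Metric.self_subset_thickening (by positivity) _ hyV)
      exact interior_subset hyint
    · exact hy1.1
  have hKccpt : ∀ i, IsCompact (Kc i) := by
    intro i
    apply IsCompact.union
    · apply isCompact_Icc.of_isClosed_subset
      · rw [diff_eq]
        exact isClosed_Icc.inter (Metric.isOpen_thickening.isClosed_compl)
      · exact diff_subset
    · exact ((finite_singleton (c i)).subset inter_subset_right).isCompact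
  have hKccov : ∀ y ∈ interior X ∪ Eab X, ∃ i, y ∈ Kc i := by
    intro y hy
    rcases hy with hyV | hyE
    · obtain ⟨ε, hε, hball⟩ := Metric.isOpen_iff.mp isOpen_interior y hyV
      obtain ⟨n1, hn1⟩ := exists_nat_one_div_lt hε
      obtain ⟨n2, hn2⟩ := exists_nat_ge |y|
      refine ⟨max n1 n2, Or.inl ⟨?_, ?_⟩⟩
      · have hle : |y| ≤ ((max n1 n2 : ℕ) : ℝ) :=
          le_trans hn2 (by exact_mod_cast le_max_right n1 n2)
        rw [abs_le] at hle
        exact ⟨by linarith [hle.1], hle.2⟩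
      · intro hythick
        obtain ⟨z, hz, hdz⟩ := Metric.mem_thickening_iff.mp hythick
        apply hz
        apply hball
        rw [Metric.mem_ball, dist_comm]
        have hmono : 1 / ((max n1 n2 : ℕ) : ℝ) + 1 = 0 ∨ True := Or.inr trivial
        have hle2 : (1 : ℝ) / ((max n1 n2 : ℕ) + 1) ≤ 1 / (n1 + 1) := by
          apply one_div_le_one_div_of_le
          · positivity
          · have : (n1 : ℝ) ≤ ((max n1 n2 : ℕ) : ℝ) := by exact_mod_cast le_max_left n1 n2
            linarith
        calc dist y z < 1 / ((max n1 n2 : ℕ) + 1) := hdz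
          _ ≤ 1 / (n1 + 1) := hle2
          _ < ε := hn1
    · obtain ⟨p, hp⟩ := hc hyE
      exact ⟨p, Or.inr ⟨hyE, by rw [mem_singleton_iff, ← hp]⟩⟩
  -- finite subcovers over the compact pieces
  have hKselex : ∀ i : ℕ, ∃ F : Set (Set X), F ⊆ 𝒰 (3 * i + 1) ∧ F.Finite ∧
      ∀ x : X, (x : ℝ) ∈ Kc i → x ∈ ⋃₀ F := by
    intro i
    have hOex : ∀ U : Set X, ∃ O : Set ℝ, U ∈ 𝒰 (3 * i + 1) →
        (IsOpen O ∧ (fun x : X => (x : ℝ)) ⁻¹' O = U) := by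
      intro U
      by_cases hU : U ∈ 𝒰 (3 * i + 1)
      · obtain ⟨O, hO1, hO2⟩ := isOpen_induced_iff.mp ((hcov _).1 U hU)
        exact ⟨O, fun _ => ⟨hO1, hO2⟩⟩
      · exact ⟨∅, fun hU' => absurd hU' hU⟩
    choose O hO using hOex
    have hcover : Kc i ⊆ ⋃ U : 𝒰 (3 * i + 1), O U := by
      intro y hy
      have hyX : y ∈ X := hKcX i hy
      have hmem : (⟨y, hyX⟩ : X) ∈ ⋃₀ 𝒰 (3 * i + 1) := by rw [(hcov _).2]; exact mem_univ _
      obtain ⟨U, hU𝒰, hyU⟩ := hmem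
      refine mem_iUnion.mpr ⟨⟨U, hU𝒰⟩, ?_⟩
      have hpre := (hO U hU𝒰).2
      rw [← hpre] at hyU
      exact hyU
    obtain ⟨t, ht⟩ := (hKccpt i).elim_finite_subcover (fun U : 𝒰 (3 * i + 1) => O U)
      (fun U => (hO U U.2).1) hcover
    refine ⟨(fun U : 𝒰 (3 * i + 1) => (U : Set X)) '' (t : Set (𝒰 (3 * i + 1))), ?_, ?_, ?_⟩
    · rintro U' ⟨U, _, rfl⟩
      exact U.2
    · exact (t.finite_toSet.image _)
    · intro x hx
      have hxt := ht hx
      obtain ⟨U, hUt, hxO⟩ := mem_iUnion₂.mp hxt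
      refine ⟨(U : Set X), ⟨U, hUt, rfl⟩, ?_⟩
      have hpre := (hO U U.2).2
      rw [← hpre]
      exact hxO
  choose KselF hKsel1 hKsel2 hKsel3 using hKselex
  -- assemble the final selection
  refine ⟨fun m => if m % 3 = 0 then Upar (m / 3) '' (Set.Iic (g (m / 3)))
      else if m % 3 = 1 then KselF (m / 3)
      else if c (m / 3) ∈ Eab X then {Upick (m / 3)} else ∅, ?_, ?_⟩
  · intro m
    dsimp only
    rcases (by omega : m % 3 = 0 ∨ m % 3 = 1 ∨ m % 3 = 2) with h3 | h3 | h3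
    · obtain ⟨q, rfl⟩ : ∃ q, m = 3 * q := ⟨m / 3, by omega⟩
      rw [if_pos h3]
      have hq : 3 * q / 3 = q := by omega
      rw [hq]
      constructor
      · rintro U' ⟨i, _, rfl⟩
        exact hUparm q i
      · exact (Set.finite_Iic _).image _
    · obtain ⟨q, rfl⟩ : ∃ q, m = 3 * q + 1 := ⟨m / 3, by omega⟩
      rw [if_neg (by omega : ¬ ((3 * q + 1) % 3 = 0)), if_pos (by omega : (3 * q + 1) % 3 = 1)]
      have hq : (3 * q + 1) / 3 = q := by omega
      rw [hq]
      exact ⟨hKsel1 q, hKsel2 q⟩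
    · obtain ⟨q, rfl⟩ : ∃ q, m = 3 * q + 2 := ⟨m / 3, by omega⟩
      rw [if_neg (by omega : ¬ ((3 * q + 2) % 3 = 0)), if_neg (by omega : ¬ ((3 * q + 2) % 3 = 1))]
      have hq : (3 * q + 2) / 3 = q := by omega
      rw [hq]
      by_cases hcp : c q ∈ Eab X
      · rw [if_pos hcp]
        refine ⟨?_, finite_singleton _⟩
        intro U' hU'
        rw [mem_singleton_iff] at hU'
        subst hU'
        exact (hUpick q hcp).1
      · rw [if_neg hcp]
        exact ⟨empty_subset _, finite_empty⟩
  · apply eq_univ_of_forall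
    intro x
    rw [mem_iUnion]
    by_cases hz : (x : ℝ) ∈ X \ (interior X ∪ Eab X)
    · obtain ⟨n, hn⟩ := hgx x
      have hx1 : (x : ℝ) ∈ W n (g n) := hWmono n _ _ (le_of_lt hn) (hΨspec x n)
      obtain ⟨i, hik, hmem⟩ := mem_iUnion₂.mp hx1
      rcases hmem with hI | hG
      · refine ⟨3 * n, ?_⟩
        dsimp only
        have h30 : (3 * n) % 3 = 0 := by omega
        have h3d : (3 * n) / 3 = n := by omega
        rw [if_pos h30, h3d]
        exact ⟨Upar n i, ⟨i, hik, rfl⟩, hUpart n i (x : ℝ) x.2 hI⟩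
      · have htr := hGstr i ⟨x.2, hG⟩
        have hxSpl : (x : ℝ) ∈ ⋃ e ∈ Eab X, Metric.ball e (ηpt e) := by
          rcases htr with hie | hS
          · exact absurd hie hz.2
          · exact hS
        obtain ⟨p, hpE', hxU⟩ := hSplcov (x : ℝ) x.2 hxSpl
        refine ⟨3 * p + 2, ?_⟩
        dsimp only
        rw [if_neg (by omega : ¬ ((3 * p + 2) % 3 = 0)), if_neg (by omega : ¬ ((3 * p + 2) % 3 = 1))]
        have h3d : (3 * p + 2) / 3 = p := by omega
        rw [h3d, if_pos hpE']
        exact ⟨Upick p, mem_singleton _, hxU⟩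
    · have hxe : (x : ℝ) ∈ interior X ∪ Eab X := by
        by_contra hcon
        exact hz ⟨x.2, hcon⟩
      obtain ⟨i, hi⟩ := hKccov (x : ℝ) hxe
      refine ⟨3 * i + 1, ?_⟩
      dsimp only
      rw [if_neg (by omega : ¬ ((3 * i + 1) % 3 = 0)), if_pos (by omega : (3 * i + 1) % 3 = 1)]
      have h3d : (3 * i + 1) / 3 = i := by omega
      rw [h3d]
      exact hKsel3 i x hi

/-- Hurewicz' theorem: a set of reals satisfies `Ufin(O,O)` iff no continuous
image of it in the Baire space is dominating. -/
theorem menger_characterization (X : Set ℝ) :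
    UfinOO X ↔ ∀ Ψ : X → (ℕ → ℕ), Continuous Ψ → ¬ DominatingFam (Set.range Ψ) := by
  exact ⟨forward_dir X, backward_dir X⟩
end

section
/- Every Sierpiński set S ⊆ [0,1] satisfies Ufin(O,Γ) (the Hurewicz property). -/
open Filter Set

/-- Every Sierpiński set `S ⊆ [0,1]` (an uncountable set meeting every Lebesgue-null set in
a countable set) satisfies the Hurewicz property `Ufin(O,Γ)`. -/
theorem sierpinski_set_hurewicz (S : Set ℝ) (hsub : S ⊆ Set.Icc 0 1)
    (hunc : ¬ S.Countable)
    (hnull : ∀ N : Set ℝ, MeasureTheory.volume N = 0 → (S ∩ N).Countable) :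
    UfinOGamma S := by
  classical
  intro 𝒰 hcov _hfin
  set μ := (MeasureTheory.volume : MeasureTheory.Measure ℝ) with hμdef
  -- S is nonempty
  have hSne : S.Nonempty := by
    rcases S.eq_empty_or_nonempty with h | h
    · exact absurd (h ▸ countable_empty) hunc
    · exact h
  have hXne : Nonempty ↥S := hSne.to_subtype
  -- countable subcovers
  have hctble : ∀ n, ∃ U : ℕ → Set ↥S, (∀ k, U k ∈ 𝒰 n) ∧ ⋃ k, U k = univ := by
    intro n
    obtain ⟨T, hTc, hT𝒰, hTu⟩ :=
      TopologicalSpace.isOpen_sUnion_countable (𝒰 n) (hcov n).1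
    have hTne : T.Nonempty := by
      rcases hXne with ⟨x⟩
      have hx : x ∈ ⋃₀ T := by rw [hTu, (hcov n).2]; trivial
      rcases hx with ⟨t, ht, _⟩
      exact ⟨t, ht⟩
    obtain ⟨U, hU⟩ := hTc.exists_eq_range hTne
    refine ⟨U, fun k => hT𝒰 (hU ▸ mem_range_self k), ?_⟩
    rw [← sUnion_range, ← hU, hTu, (hcov n).2]
  choose U hUmem hUcov using hctble
  -- corresponding open sets in ℝ
  have hopen : ∀ n k, ∃ V : Set ℝ, IsOpen V ∧ Subtype.val ⁻¹' V = U n k := by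
    intro n k
    have := (hcov n).1 _ (hUmem n k)
    rwa [isOpen_induced_iff] at this
  choose V hVopen hVpre using hopen
  -- S is covered by the V n k
  have hScov : ∀ n, S ⊆ ⋃ k, V n k := by
    intro n x hx
    have : (⟨x, hx⟩ : ↥S) ∈ ⋃ k, U n k := by rw [hUcov n]; trivial
    rcases mem_iUnion.mp this with ⟨k, hk⟩
    rw [← hVpre n k] at hk
    exact mem_iUnion.mpr ⟨k, hk⟩
  -- measurable hull of S
  set E := MeasureTheory.toMeasurable μ S with hEdef
  have hSE : S ⊆ E := MeasureTheory.subset_toMeasurable μ S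
  have hEm : MeasurableSet E := MeasureTheory.measurableSet_toMeasurable μ S
  have hμS : μ S ≠ ⊤ := by
    refine ne_top_of_le_ne_top ?_ (MeasureTheory.measure_mono hsub)
    simp [hμdef, Real.volume_Icc]
  have hμE : μ E = μ S := MeasureTheory.measure_toMeasurable S
  have hμEne : μ E ≠ ⊤ := hμE ▸ hμS
  -- choose finite stages with small error
  have hstage : ∀ n, ∃ m : ℕ, μ (E \ ⋃ k ∈ Finset.range m, V n k) < 2⁻¹ ^ n := by
    intro n
    set D : ℕ → Set ℝ := fun m => E \ ⋃ k ∈ Finset.range m, V n k with hDdef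
    have hDmeas : ∀ m, MeasurableSet (D m) := fun m =>
      hEm.diff (isOpen_biUnion fun k _ => hVopen n k).measurableSet
    have hDanti : Antitone D := by
      intro a b hab
      exact diff_subset_diff_right (biUnion_subset_biUnion_left (Finset.range_subset_range.mpr hab))
    have hiInter : ⋂ m, D m = E \ ⋃ k, V n k := by
      rw [← diff_iUnion]
      congr 1
      ext x
      simp only [mem_iUnion, Finset.mem_range]
      exact ⟨fun ⟨m, k, hk, hx⟩ => ⟨k, hx⟩, fun ⟨k, hx⟩ => ⟨k + 1, k, Nat.lt_succ_self k, hx⟩⟩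
    have hnull0 : μ (E \ ⋃ k, V n k) = 0 := by
      have hmeasU : MeasurableSet (⋃ k, V n k) :=
        (isOpen_iUnion fun k => hVopen n k).measurableSet
      have h1 : μ (E ∩ ⋃ k, V n k) = μ (S ∩ ⋃ k, V n k) :=
        MeasureTheory.Measure.measure_toMeasurable_inter hmeasU hμS
      have h2 : S ∩ ⋃ k, V n k = S := inter_eq_left.mpr (hScov n)
      have h3 : μ (E ∩ ⋃ k, V n k) + μ (E \ ⋃ k, V n k) = μ E :=
        MeasureTheory.measure_inter_add_diff E hmeasU
      rw [h1, h2, ← hμE] at h3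
      by_contra hne
      have hlt : μ E < μ E + μ (E \ ⋃ k, V n k) := ENNReal.lt_add_right hμEne hne
      rw [h3] at hlt
      exact lt_irrefl _ hlt
    have htend : Tendsto (μ ∘ D) atTop (nhds 0) := by
      have := MeasureTheory.tendsto_measure_iInter_atTop
        (μ := μ) (fun m => (hDmeas m).nullMeasurableSet) hDanti
        ⟨0, ne_top_of_le_ne_top hμEne (MeasureTheory.measure_mono diff_subset)⟩
      rwa [hiInter, hnull0] at this
    have hpos : (0 : ENNReal) < 2⁻¹ ^ n := by
      apply ENNReal.pow_pos
      norm_num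
    exact (htend.eventually (gt_mem_nhds hpos)).exists
  choose m hm using hstage
  -- the null limsup set
  set H : ℕ → Set ℝ := fun n => E \ ⋃ k ∈ Finset.range (m n), V n k with hHdef
  have htsum : ∑' n, μ (H n) ≠ ⊤ := by
    refine ne_top_of_le_ne_top ?_ (ENNReal.tsum_le_tsum fun n => (hm n).le)
    rw [ENNReal.tsum_geometric]
    simp [ENNReal.sub_half]
  set N := limsup H atTop with hNdef
  have hμN : μ N = 0 := MeasureTheory.measure_limsup_atTop_eq_zero htsum
  have hSN : (S ∩ N).Countable := hnull N hμN
  -- the countable exceptional set in the subtype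
  have hCs : {y : ↥S | (y : ℝ) ∈ N}.Countable := by
    have : {y : ↥S | (y : ℝ) ∈ N} = Subtype.val ⁻¹' (S ∩ N) := by
      ext y; simp [y.2]
    rw [this]
    exact hSN.preimage Subtype.val_injective
  obtain ⟨x₀⟩ := hXne
  obtain ⟨g, hg⟩ := (hCs.insert x₀).exists_eq_range (insert_nonempty _ _)
  have hgmem : ∀ y : ↥S, (y : ℝ) ∈ N → y ∈ range g := by
    intro y hy
    rw [← hg]
    exact mem_insert_of_mem _ hy
  -- choice of cover elements for individual points
  have hpt : ∀ (n : ℕ) (y : ↥S), ∃ u, u ∈ 𝒰 n ∧ y ∈ u := by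
    intro n y
    have : y ∈ ⋃₀ 𝒰 n := by rw [(hcov n).2]; trivial
    rcases this with ⟨u, hu, hyu⟩
    exact ⟨u, hu, hyu⟩
  choose c hc𝒰 hcmem using hpt
  -- the finite selections
  refine ⟨fun n => (U n '' Iio (m n)) ∪ ((fun i => c n (g i)) '' Iic n), ?_, ?_⟩
  · intro n
    constructor
    · rintro u (⟨k, _, rfl⟩ | ⟨i, _, rfl⟩)
      · exact hUmem n k
      · exact hc𝒰 n (g i)
    · exact ((finite_Iio _).image _).union ((finite_Iic _).image _)
  · intro x
    by_cases hx : (x : ℝ) ∈ N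
    · obtain ⟨i, hi⟩ := hgmem x hx
      filter_upwards [eventually_ge_atTop i] with n hn
      exact ⟨c n (g i), Or.inr ⟨i, hn, rfl⟩, hi ▸ hcmem n (g i)⟩
    · have hfreq : ¬ ∃ᶠ n in atTop, (x : ℝ) ∈ H n := by
        rwa [← mem_limsup_iff_frequently_mem]
      rw [not_frequently] at hfreq
      filter_upwards [hfreq] with n hn
      have hxE : (x : ℝ) ∈ E := hSE x.2
      have hxW : (x : ℝ) ∈ ⋃ k ∈ Finset.range (m n), V n k := by
        by_contra hxW
        exact hn ⟨hxE, hxW⟩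
      simp only [mem_iUnion, Finset.mem_range] at hxW
      obtain ⟨k, hk, hxk⟩ := hxW
      have : x ∈ U n k := by rw [← hVpre n k]; exact hxk
      exact ⟨U n k, Or.inl ⟨k, hk, rfl⟩, this⟩
end

section
/- Every Luzin set L ⊆ ℝ satisfies S1(O,O) (the Rothberger property). -/
open Filter Set

/-- The Rothberger property `S1(O,O)`. -/
def S1OO (X : Type*) [TopologicalSpace X] : Prop :=
  ∀ 𝒰 : ℕ → Set (Set X), (∀ n, IsOpenCover (𝒰 n)) →
    ∃ U : ℕ → Set X, (∀ n, U n ∈ 𝒰 n) ∧ (⋃ n, U n) = Set.univ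

/-- Every Luzin set (an uncountable set of reals meeting every meager set in a countable
set) satisfies the Rothberger property `S1(O,O)`. -/
theorem luzin_set_rothberger (L : Set ℝ) (hunc : ¬ L.Countable)
    (hmeager : ∀ M : Set ℝ, IsMeagre M → (L ∩ M).Countable) :
    S1OO L := by
  intro 𝒰 hcov
  -- L is nonempty
  have hLne : L.Nonempty := by
    rcases L.eq_empty_or_nonempty with h | h
    · exact absurd (h ▸ Set.countable_empty) hunc
    · exact h
  obtain ⟨x0, hx0⟩ := hLne
  -- selection: for each n and each point x of L, an element of 𝒰 n containing x
  have hsel : ∀ n, ∀ x : L, ∃ U ∈ 𝒰 n, x ∈ U := by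
    intro n x
    have : (x : L) ∈ ⋃₀ 𝒰 n := by rw [(hcov n).2]; trivial
    simpa [Set.mem_sUnion] using this
  choose pick hpickmem hpickx using hsel
  -- each element of 𝒰 n is the trace of an open set of ℝ
  have hopen : ∀ n (x : L), ∃ V : Set ℝ, IsOpen V ∧
      (Subtype.val ⁻¹' V : Set L) = pick n x := by
    intro n x
    have := (hcov n).1 _ (hpickmem n x)
    rwa [isOpen_induced_iff] at this
  choose V hVopen hVpre using hopen
  -- a countable dense subset of L
  have : Nonempty L := ⟨⟨x0, hx0⟩⟩
  obtain ⟨D, hDc, hDd⟩ := TopologicalSpace.exists_countable_dense L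
  have hDne : D.Nonempty := hDd.nonempty
  obtain ⟨d, hd⟩ := hDc.exists_eq_range hDne
  -- the open set G
  set G : Set ℝ := ⋃ k, V (2 * k) (d k) with hG
  have hGopen : IsOpen G := isOpen_iUnion fun k => hVopen _ _
  -- L ⊆ closure G
  have hLsub : L ⊆ closure G := by
    intro x hx
    have hxcl : (⟨x, hx⟩ : L) ∈ closure D := by
      rw [hDd.closure_eq]; trivial
    have h1 : x ∈ closure (Subtype.val '' D) := by
      have := image_closure_subset_closure_image (f := (Subtype.val : L → ℝ))
        continuous_subtype_val (s := D)
      exact this ⟨⟨x, hx⟩, hxcl, rfl⟩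
    refine closure_mono ?_ h1
    rintro y ⟨z, hz, rfl⟩
    rw [hd] at hz
    obtain ⟨k, rfl⟩ := hz
    have : d k ∈ pick (2 * k) (d k) := hpickx _ _
    rw [← hVpre] at this
    exact Set.mem_iUnion.2 ⟨k, this⟩
  -- frontier G is meagre
  have hfront : IsMeagre (frontier G) := by
    rw [isMeagre_iff_countable_union_isNowhereDense]
    refine ⟨{frontier G}, ?_, Set.countable_singleton _, by simp⟩
    rintro t rfl
    rw [IsNowhereDense, IsClosed.closure_eq isClosed_frontier]
    rw [← frontier_compl]
    exact interior_frontier (isClosed_compl_iff.2 hGopen)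
  -- the leftover set is countable
  have hScount : ((L \ G) ∪ {x0}).Countable := by
    have h1 : L \ G ⊆ L ∩ frontier G := by
      intro x hx
      exact ⟨hx.1, hLsub hx.1, by rw [hGopen.interior_eq]; exact hx.2⟩
    exact ((hmeager _ hfront).mono h1).union (Set.countable_singleton _)
  have hSne : ((L \ G) ∪ {x0}).Nonempty := ⟨x0, Or.inr rfl⟩
  obtain ⟨f, hf⟩ := hScount.exists_eq_range hSne
  have hfL : ∀ k, f k ∈ L := by
    intro k
    have : f k ∈ (L \ G) ∪ {x0} := by rw [hf]; exact ⟨k, rfl⟩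
    rcases this with h | h
    · exact h.1
    · rw [Set.mem_singleton_iff] at h; rw [h]; exact hx0
  -- the point used at stage n
  set p : ℕ → L := fun n => if Even n then d (n / 2) else ⟨f (n / 2), hfL _⟩ with hp
  refine ⟨fun n => pick n (p n), fun n => hpickmem n (p n), ?_⟩
  rw [Set.eq_univ_iff_forall]
  rintro ⟨x, hx⟩
  by_cases hxG : x ∈ G
  · obtain ⟨k, hk⟩ := Set.mem_iUnion.1 hxG
    refine Set.mem_iUnion.2 ⟨2 * k, ?_⟩
    have hpk : p (2 * k) = d k := by
      simp [hp, Nat.mul_div_cancel_left k (by norm_num : 0 < 2)]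
    rw [hpk, ← hVpre]
    exact hk
  · have : x ∈ (L \ G) ∪ {x0} := Or.inl ⟨hx, hxG⟩
    rw [hf] at this
    obtain ⟨k, hk⟩ := this
    refine Set.mem_iUnion.2 ⟨2 * k + 1, ?_⟩
    have hpk : p (2 * k + 1) = ⟨f k, hfL k⟩ := by
      simp [hp, Nat.even_add_one, Nat.mul_div_cancel_left k (by norm_num : 0 < 2),
        Nat.mul_add_div (by norm_num : 0 < 2)]
    have := hpickx (2 * k + 1) (p (2 * k + 1))
    rw [hpk] at this ⊢
    have hxeq : (⟨x, hx⟩ : L) = ⟨f k, hfL k⟩ := Subtype.ext hk.symm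
    rw [hxeq]
    exact this
end

section
/- Assume the Continuum Hypothesis (2^{ℵ₀} = ℵ₁). Then there exist a set X ⊆ ℝ satisfying S1(Ω,Γ) and a countable subset Q ⊆ X such that X ∖ Q does not satisfy Ufin(O,O) (the Menger property). In particular, none of the properties between S1(Ω,Γ) and Ufin(O,O) is hereditary. -/
open Filter Set

/-- An `ω`-cover: no single member covers the whole space, but every finite set is
contained in some member. -/
def IsOmegaCover {X : Type*} (𝒰 : Set (Set X)) : Prop :=
  ⋃₀ 𝒰 = Set.univ ∧ (∀ U ∈ 𝒰, U ≠ Set.univ) ∧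
    ∀ F : Set X, F.Finite → ∃ U ∈ 𝒰, F ⊆ U

/-- A `γ`-cover: an infinite cover such that every point belongs to all but finitely many
members. -/
def IsGammaCover {X : Type*} (𝒰 : Set (Set X)) : Prop :=
  𝒰.Infinite ∧ ⋃₀ 𝒰 = Set.univ ∧ ∀ x : X, {U ∈ 𝒰 | x ∉ U}.Finite

/-- An open `ω`-cover. -/
def IsOpenOmegaCover {X : Type*} [TopologicalSpace X] (𝒰 : Set (Set X)) : Prop :=
  (∀ U ∈ 𝒰, IsOpen U) ∧ IsOmegaCover 𝒰

/-- The Gerlits–Nagy property `S1(Ω,Γ)`. -/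
def S1OmegaGamma (X : Type*) [TopologicalSpace X] : Prop :=
  ∀ 𝒰 : ℕ → Set (Set X), (∀ n, IsOpenOmegaCover (𝒰 n)) →
    ∃ U : ℕ → Set X, (∀ n, U n ∈ 𝒰 n) ∧ IsGammaCover (Set.range U)

/-!
Work in Cantor space `ℕ → Bool`, whose points are read as subsets of `ℕ`. Under CH, list in
order type `ω₁` all functions `g : ℕ → ℕ` and all sequences of families of cylinder sets, and
build a `⊆*`-decreasing `ω₁`-sequence of infinite sets `bᵢ`: a pseudo-intersection of the
countably many earlier ones is thinned out so that the enumeration of `bᵢ` dominates the `i`-th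
function and, if the `i`-th sequence consists of `ω`-covers of `Fin ∪ {bⱼ | j < i}` (`Fin` being
the finite sets), a selection from it eventually contains every point of that set and every
`x ⊆* bᵢ`.

Open `ω`-covers of `X = Fin ∪ {bᵢ}` refine to cylinder `ω`-covers, which are listed at some
stage `i`; since all later `bⱼ` are `⊆* bᵢ`, the selection made there is a `γ`-cover, so `X` is
`S1(Ω,Γ)`. The set `X \ Fin = {bᵢ}` is dominating, hence not Menger. Finally Cantor space embeds
into `ℝ`.
-/

open Function

section CoveringProperties

variable {α β : Type*}

def HasGammaSelection (𝒰 : ℕ → Set (Set α)) (A : Set α) : Prop :=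
  ∃ V : ℕ → Set α, (∀ n, V n ∈ 𝒰 n) ∧ ∀ x ∈ A, ∀ᶠ n in atTop, x ∈ V n

lemma HasGammaSelection.mono {𝒰 : ℕ → Set (Set α)} {A B : Set α} (h : HasGammaSelection 𝒰 A)
    (hBA : B ⊆ A) : HasGammaSelection 𝒰 B :=
  let ⟨V, hV, hmem⟩ := h
  ⟨V, hV, fun x hx => hmem x (hBA hx)⟩

lemma isGammaCover_range_of_eventually_mem {U : ℕ → Set α} (hU : ∀ n, U n ≠ univ)
    (hmem : ∀ x, ∀ᶠ n in atTop, x ∈ U n) : IsGammaCover (range U) := by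
  refine ⟨fun hfin => ?_, eq_univ_of_forall fun x => ?_, fun x => ?_⟩
  · have : Nonempty α := ⟨((ne_univ_iff_exists_notMem _).1 (hU 0)).choose⟩
    choose! z hz using fun V (hV : V ∈ range U) => (ne_univ_iff_exists_notMem V).1 <| by
      obtain ⟨n, rfl⟩ := hV; exact hU n
    obtain ⟨n, hn⟩ := ((eventually_all_finite hfin).2 fun V _ => hmem (z V)).exists
    exact hz (U n) (mem_range_self n) (hn (U n) (mem_range_self n))
  · obtain ⟨n, hn⟩ := (hmem x).exists
    exact ⟨U n, mem_range_self n, hn⟩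
  · obtain ⟨N, hN⟩ := eventually_atTop.1 (hmem x)
    refine ((finite_Iio N).image U).subset ?_
    rintro _ ⟨⟨n, rfl⟩, hxn⟩
    exact ⟨n, not_le.1 fun h => hxn (hN n h), rfl⟩

section Preimage

variable {f : α → β}

lemma sUnion_image_preimage (𝒱 : Set (Set β)) : ⋃₀ (preimage f '' 𝒱) = f ⁻¹' ⋃₀ 𝒱 := by
  rw [sUnion_image, preimage_sUnion]

lemma exists_finite_preimage_eq (hf : Surjective f) {𝒱 : Set (Set β)} {ℱ : Set (Set α)}
    (hℱ : ℱ ⊆ preimage f '' 𝒱) (hfin : ℱ.Finite) :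
    ∃ 𝒢 ⊆ 𝒱, 𝒢.Finite ∧ ℱ = preimage f '' 𝒢 :=
  ⟨𝒱 ∩ preimage f ⁻¹' ℱ, inter_subset_left,
    (hfin.preimage hf.preimage_injective.injOn).subset inter_subset_right,
    by rw [image_inter_preimage, inter_eq_right.2 hℱ]⟩

lemma Function.Surjective.preimage_eq_univ_iff (hf : Surjective f) {V : Set β} :
    f ⁻¹' V = univ ↔ V = univ := by
  rw [Set.preimage_eq_univ_iff, hf.range_eq, univ_subset_iff]

lemma IsOpenOmegaCover.preimage [TopologicalSpace α] [TopologicalSpace β] (hf : Continuous f)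
    (hsurj : Surjective f) {𝒱 : Set (Set β)} (h𝒱 : IsOpenOmegaCover 𝒱) :
    IsOpenOmegaCover (preimage f '' 𝒱) := by
  obtain ⟨hopen, hcover, hne, hfin⟩ := h𝒱
  refine ⟨forall_mem_image.2 fun V hV => (hopen V hV).preimage hf, ?_, ?_, fun F hF => ?_⟩
  · rw [sUnion_image_preimage, hcover, preimage_univ]
  · exact forall_mem_image.2 fun V hV => hsurj.preimage_eq_univ_iff.not.2 (hne V hV)
  · obtain ⟨V, hV, hFV⟩ := hfin (f '' F) (hF.image f)
    exact ⟨f ⁻¹' V, mem_image_of_mem _ hV, image_subset_iff.1 hFV⟩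

lemma IsGammaCover.of_preimage (hf : Surjective f) {𝒱 : Set (Set β)}
    (h : IsGammaCover (preimage f '' 𝒱)) : IsGammaCover 𝒱 := by
  obtain ⟨hinf, hcover, hfin⟩ := h
  refine ⟨hinf.of_image _, ?_, fun y => ?_⟩
  · rwa [sUnion_image_preimage, hf.preimage_eq_univ_iff] at hcover
  · obtain ⟨x, rfl⟩ := hf y
    refine Finite.of_finite_image ((hfin x).subset ?_) hf.preimage_injective.injOn
    rintro _ ⟨V, ⟨hV, hxV⟩, rfl⟩
    exact ⟨mem_image_of_mem _ hV, hxV⟩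

lemma S1OmegaGamma.of_surjective [TopologicalSpace α] [TopologicalSpace β] (h : S1OmegaGamma α)
    (hf : Continuous f) (hsurj : Surjective f) : S1OmegaGamma β := by
  intro 𝒱 h𝒱
  obtain ⟨U, hU, hγ⟩ := h _ fun n => (h𝒱 n).preimage hf hsurj
  choose V hV hVU using hU
  refine ⟨V, hV, IsGammaCover.of_preimage hsurj ?_⟩
  rwa [← range_comp, show preimage f ∘ V = U from funext hVU]

lemma UfinOO.of_surjective [TopologicalSpace α] [TopologicalSpace β] (h : UfinOO α)
    (hf : Continuous f) (hsurj : Surjective f) : UfinOO β := by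
  intro 𝒱 hcover hnofin
  have hcover' : ∀ n, IsOpenCover (preimage f '' 𝒱 n) := fun n =>
    ⟨forall_mem_image.2 fun V hV => ((hcover n).1 V hV).preimage hf,
      by rw [sUnion_image_preimage, (hcover n).2, preimage_univ]⟩
  have hnofin' : ∀ n, ¬ HasFinSubcover (preimage f '' 𝒱 n) := by
    rintro n ⟨ℱ, hℱ, hfin, hunion⟩
    obtain ⟨𝒢, h𝒢, h𝒢fin, rfl⟩ := exists_finite_preimage_eq hsurj hℱ hfin
    rw [sUnion_image_preimage, hsurj.preimage_eq_univ_iff] at hunion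
    exact hnofin n ⟨𝒢, h𝒢, h𝒢fin, hunion⟩
  obtain ⟨ℱ, hℱ, hunion⟩ := h _ hcover' hnofin'
  choose 𝒢 h𝒢 h𝒢fin h𝒢eq using fun n => exists_finite_preimage_eq hsurj (hℱ n).1 (hℱ n).2
  refine ⟨𝒢, fun n => ⟨h𝒢 n, h𝒢fin n⟩, ?_⟩
  simp only [h𝒢eq, sUnion_image_preimage, ← preimage_iUnion] at hunion
  exact hsurj.preimage_eq_univ_iff.1 hunion

end Preimage

lemma Monotone.exists_sUnion_subset {ι : Type*} [Preorder ι] [IsDirectedOrder ι] [Nonempty ι]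
    {U : ι → Set α} (hU : Monotone U) {ℱ : Set (Set α)} (hℱ : ℱ ⊆ range U) (hfin : ℱ.Finite) :
    ∃ k, ⋃₀ ℱ ⊆ U k := by
  have hev : ∀ V ∈ ℱ, ∀ᶠ k in atTop, V ⊆ U k := fun V hV => by
    obtain ⟨j, rfl⟩ := hℱ hV
    exact (eventually_ge_atTop j).mono fun k hk => hU hk
  obtain ⟨k, hk⟩ := ((eventually_all_finite hfin).2 hev).exists
  exact ⟨k, sUnion_subset hk⟩

lemma not_ufinOO_of_escaping [TopologicalSpace α] (U : ℕ → ℕ → Set α)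
    (hU : ∀ n k, IsOpen (U n k)) (hmono : ∀ n, Monotone (U n)) (hcover : ∀ n x, ∃ k, x ∈ U n k)
    (hescape : ∀ g : ℕ → ℕ, ∃ x, ∀ n, x ∉ U n (g n)) : ¬ UfinOO α := by
  have hopen : ∀ n, IsOpenCover (range (U n)) := fun n =>
    ⟨forall_mem_range.2 (hU n), eq_univ_of_forall fun x =>
      let ⟨k, hk⟩ := hcover n x; ⟨U n k, mem_range_self k, hk⟩⟩
  have hnofin : ∀ n, ¬ HasFinSubcover (range (U n)) := by
    rintro n ⟨ℱ, hℱ, hfin, hunion⟩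
    obtain ⟨k, hk⟩ := (hmono n).exists_sUnion_subset hℱ hfin
    obtain ⟨x, hx⟩ := hescape fun _ => k
    exact hx n (hk (hunion ▸ mem_univ x))
  intro hM
  obtain ⟨ℱ, hℱ, hunion⟩ := hM _ hopen hnofin
  choose k hk using fun n => (hmono n).exists_sUnion_subset (hℱ n).1 (hℱ n).2
  obtain ⟨x, hx⟩ := hescape k
  obtain ⟨n, hn⟩ := mem_iUnion.1 (hunion ▸ mem_univ x)
  exact hx n (hk n hn)

end CoveringProperties

section CantorSpace

def zeroFrom (L : ℕ) : Set (ℕ → Bool) := {x | ∀ n, L ≤ n → x n = false}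

def finiteSupport : Set (ℕ → Bool) := {x | ∀ᶠ n in atTop, x n = false}

lemma zeroFrom_finite (L : ℕ) : (zeroFrom L).Finite := by
  refine Finite.of_finite_image (f := (Finset.range L).restrict) (toFinite _)
    fun x hx y hy hxy => funext fun n => ?_
  by_cases hn : n < L
  · exact congrFun hxy ⟨n, Finset.mem_range.2 hn⟩
  · rw [hx n (not_lt.1 hn), hy n (not_lt.1 hn)]

lemma finiteSupport_eq_iUnion_zeroFrom : finiteSupport = ⋃ L, zeroFrom L := by
  ext x
  simp [finiteSupport, zeroFrom, eventually_atTop]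

lemma zeroFrom_subset_finiteSupport (L : ℕ) : zeroFrom L ⊆ finiteSupport :=
  finiteSupport_eq_iUnion_zeroFrom ▸ subset_iUnion zeroFrom L

lemma finiteSupport_countable : finiteSupport.Countable :=
  finiteSupport_eq_iUnion_zeroFrom ▸ countable_iUnion fun L => (zeroFrom_finite L).countable

lemma notMem_finiteSupport_of_frequently {x : ℕ → Bool} (hx : ∃ᶠ n in atTop, x n = true) :
    x ∉ finiteSupport := fun h => by
  obtain ⟨n, htrue, hfalse⟩ := (hx.and_eventually h).exists
  simp [htrue] at hfalse

def cylinderSets : Set (Set (ℕ → Bool)) :=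
  ⋃ M, range fun S : Set (Finset.range M → Bool) => (Finset.range M).restrict ⁻¹' S

lemma cylinderSets_countable : cylinderSets.Countable :=
  countable_iUnion fun _ => countable_range _

lemma univ_mem_cylinderSets : univ ∈ cylinderSets :=
  mem_iUnion.2 ⟨0, univ, preimage_univ⟩

lemma exists_cylinder_subset_of_mem_cylinderSets {C : Set (ℕ → Bool)} (hC : C ∈ cylinderSets) :
    ∃ M, ∀ x ∈ C, PiNat.cylinder x M ⊆ C := by
  obtain ⟨M, S, rfl⟩ := mem_iUnion.1 hC
  refine ⟨M, fun x hx y hy => ?_⟩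
  have : (Finset.range M).restrict y = (Finset.range M).restrict x :=
    funext fun i => hy i (Finset.mem_range.1 i.2)
  rwa [mem_preimage, this]

lemma exists_mem_cylinderSets_between {F W : Set (ℕ → Bool)} (hF : F.Finite) (hW : IsOpen W)
    (hFW : F ⊆ W) : ∃ C ∈ cylinderSets, F ⊆ C ∧ C ⊆ W := by
  have hev : ∀ x ∈ F, ∀ᶠ M in atTop, PiNat.cylinder x M ⊆ W := fun x hx => by
    obtain ⟨_, ⟨y, M, rfl⟩, hxy, hyW⟩ :=
      (PiNat.isTopologicalBasis_cylinders _).exists_subset_of_mem_open (hFW hx) hW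
    rw [← PiNat.mem_cylinder_iff_eq.1 hxy] at hyW
    exact (eventually_ge_atTop M).mono fun M' hM' => (PiNat.cylinder_anti x hM').trans hyW
  obtain ⟨M, hM⟩ := ((eventually_all_finite hF).2 hev).exists
  refine ⟨(Finset.range M).restrict ⁻¹' ((Finset.range M).restrict '' F),
    mem_iUnion.2 ⟨M, _, rfl⟩, subset_preimage_image _ _, ?_⟩
  rintro y ⟨x, hx, hxy⟩
  exact hM x hx fun i hi => (congrFun hxy ⟨i, Finset.mem_range.2 hi⟩).symm

lemma mem_of_zeroFrom_subset {C : Set (ℕ → Bool)} {L M : ℕ}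
    (hM : ∀ y ∈ C, PiNat.cylinder y M ⊆ C) (hL : zeroFrom L ⊆ C) {x : ℕ → Bool}
    (hx : ∀ n, L ≤ n → n < M → x n = false) : x ∈ C := by
  refine hM (fun n => if n < M then x n else false) (hL fun n hn => ?_) fun n hn => ?_
  · split_ifs with h
    exacts [hx n hn h, rfl]
  · simp [hn]

/-- Unlike in `IsOmegaCover`, a member may be the whole space. -/
def IsCylinderOmegaCover (𝒰 : Set (Set (ℕ → Bool))) (A : Set (ℕ → Bool)) : Prop :=
  𝒰 ⊆ cylinderSets ∧ ∀ F, F.Finite → F ⊆ A → ∃ C ∈ 𝒰, F ⊆ C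

lemma IsCylinderOmegaCover.mono {𝒰 : Set (Set (ℕ → Bool))} {A B : Set (ℕ → Bool)}
    (h : IsCylinderOmegaCover 𝒰 A) (hBA : B ⊆ A) : IsCylinderOmegaCover 𝒰 B :=
  ⟨h.1, fun F hF hFB => h.2 F hF (hFB.trans hBA)⟩

lemma isCylinderOmegaCover_univ (A : Set (ℕ → Bool)) : IsCylinderOmegaCover {univ} A :=
  ⟨singleton_subset_iff.2 univ_mem_cylinderSets, fun _ _ _ => ⟨univ, rfl, subset_univ _⟩⟩

lemma s1OmegaGamma_of_hasGammaSelection {X : Set (ℕ → Bool)}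
    (h : ∀ 𝒰 : ℕ → Set (Set (ℕ → Bool)), (∀ n, IsCylinderOmegaCover (𝒰 n) X) →
      HasGammaSelection 𝒰 X) :
    S1OmegaGamma X := by
  intro 𝒲 h𝒲
  let 𝒰 : ℕ → Set (Set (ℕ → Bool)) := fun n => {C ∈ cylinderSets | ∃ U ∈ 𝒲 n, (↑) ⁻¹' C ⊆ U}
  have h𝒰 : ∀ n, IsCylinderOmegaCover (𝒰 n) X := by
    refine fun n => ⟨sep_subset _ _, fun F hF hFX => ?_⟩
    obtain ⟨U, hU, hFU⟩ := (h𝒲 n).2.2.2 ((↑) ⁻¹' F) (hF.preimage Subtype.val_injective.injOn)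
    obtain ⟨W, hW, rfl⟩ := isOpen_induced_iff.1 ((h𝒲 n).1 U hU)
    obtain ⟨C, hC, hFC, hCW⟩ :=
      exists_mem_cylinderSets_between hF hW fun x hx => hFU (a := ⟨x, hFX hx⟩) hx
    exact ⟨C, ⟨hC, _, hU, preimage_mono hCW⟩, hFC⟩
  obtain ⟨V, hV, hmem⟩ := h 𝒰 h𝒰
  choose U hU hVU using fun n => (hV n).2
  exact ⟨U, hU, isGammaCover_range_of_eventually_mem (fun n => (h𝒲 n).2.2.1 _ (hU n))
    fun x => (hmem x x.2).mono fun n hn => hVU n hn⟩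

lemma continuous_nat_count (k : ℕ) :
    Continuous fun x : ℕ → Bool => Nat.count (x · = true) k := by
  induction k with
  | zero => simpa using continuous_const
  | succ k ih =>
    simp only [Nat.count_succ]
    exact ih.add <| (continuous_of_discreteTopology
      (f := fun b : Bool => if b = true then 1 else 0)).comp (continuous_apply k)

lemma not_ufinOO_of_forall_le_nth {T : Set (ℕ → Bool)}
    (hT : ∀ x ∈ T, ∃ᶠ n in atTop, x n = true)
    (hdom : ∀ g : ℕ → ℕ, ∃ x ∈ T, ∀ n, g n ≤ Nat.nth (x · = true) n) : ¬ UfinOO T := by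
  refine not_ufinOO_of_escaping (fun n k => {x : T | n < Nat.count (x.1 · = true) k})
    (fun n k => ((continuous_nat_count k).comp continuous_subtype_val).isOpen_preimage _
      (isOpen_discrete {m | n < m}))
    (fun n k k' hk x hx => hx.trans_le (Nat.count_monotone _ hk)) (fun n x => ?_) fun g => ?_
  · refine ⟨Nat.nth (x.1 · = true) n + 1, ?_⟩
    show n < _
    rw [Nat.count_nth_succ_of_infinite (Nat.frequently_atTop_iff_infinite.1 (hT x x.2))]
    exact Nat.lt_succ_self n
  · obtain ⟨x, hx, hgx⟩ := hdom g
    exact ⟨⟨x, hx⟩, fun n => (Nat.le_nth_of_count_le (hgx n)).not_gt⟩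

end CantorSpace

section Towers

open Classical in
noncomputable def rangeIndicator (φ : ℕ → ℕ) : ℕ → Bool := fun n => decide (n ∈ range φ)

lemma rangeIndicator_eq_true {φ : ℕ → ℕ} {n : ℕ} :
    rangeIndicator φ n = true ↔ n ∈ range φ := by
  simp [rangeIndicator]

lemma frequently_rangeIndicator {φ : ℕ → ℕ} (hφ : StrictMono φ) :
    ∃ᶠ n in atTop, rangeIndicator φ n = true := by
  simp only [rangeIndicator_eq_true]
  exact Nat.frequently_atTop_iff_infinite.2 (infinite_range_of_injective hφ.injective)

lemma nth_rangeIndicator {φ : ℕ → ℕ} (hφ : StrictMono φ) (n : ℕ) :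
    Nat.nth (rangeIndicator φ · = true) n = φ n := by
  simp only [rangeIndicator_eq_true]
  simpa using (Nat.nth_comp_of_strictMono (p := (· ∈ range φ)) hφ (fun _ hk => hk)
    fun hfin => absurd hfin (infinite_range_of_injective hφ.injective)).symm

/-- Points of `ℕ → Bool` are read as subsets of `ℕ`; for them `x ≤ᶠ[atTop] y` is almost
inclusion `x ⊆* y`. -/
def IsTower {ι : Type*} [Preorder ι] (t : ι → ℕ → Bool) : Prop :=
  (∀ i, ∃ᶠ n in atTop, t i n = true) ∧ ∀ ⦃i j⦄, i ≤ j → t j ≤ᶠ[atTop] t i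

lemma IsTower.exists_frequently_eventuallyLE {ι : Type*} [Preorder ι] [IsDirectedOrder ι]
    [Countable ι] {t : ι → ℕ → Bool} (ht : IsTower t) :
    ∃ a : ℕ → Bool, (∃ᶠ n in atTop, a n = true) ∧ ∀ i, a ≤ᶠ[atTop] t i := by
  classical
  cases isEmpty_or_nonempty ι
  · exact ⟨fun _ => true, frequently_const.2 rfl, isEmptyElim⟩
  obtain ⟨e, he⟩ := exists_surjective_nat ι
  have hfreq : ∀ n, ∃ᶠ k in atTop, ∀ m ≤ n, t (e m) k = true := fun n => by
    obtain ⟨i, hi⟩ := ((Finset.range (n + 1)).image e).exists_le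
    have hev : ∀ᶠ k in atTop, ∀ m ∈ Finset.range (n + 1), t i k ≤ t (e m) k :=
      (Finset.eventually_all _).2 fun m hm => ht.2 (hi _ (Finset.mem_image_of_mem e hm))
    refine (ht.1 i).mp (hev.mono fun k hk hik m hm => ?_)
    exact Bool.le_iff_imp.1 (hk m (Finset.mem_range.2 (Nat.lt_succ_of_le hm))) hik
  obtain ⟨φ, hφ, hφt⟩ := extraction_forall_of_frequently hfreq
  refine ⟨rangeIndicator φ, frequently_rangeIndicator hφ, fun i => ?_⟩
  obtain ⟨m, rfl⟩ := he i
  filter_upwards [eventually_ge_atTop (φ m)] with k hk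
  refine Bool.le_iff_imp.2 fun hkφ => ?_
  obtain ⟨n, rfl⟩ := rangeIndicator_eq_true.1 hkφ
  exact hφt n m (hφ.le_iff_le.1 hk)

lemma exists_le_hasGammaSelection {𝒰 : ℕ → Set (Set (ℕ → Bool))} {e : ℕ → ℕ → Bool}
    (h𝒰 : ∀ n, IsCylinderOmegaCover (𝒰 n) (finiteSupport ∪ range e)) {a : ℕ → Bool}
    (ha : ∃ᶠ n in atTop, a n = true) (g : ℕ → ℕ) :
    ∃ b ≤ a, (∃ᶠ n in atTop, b n = true) ∧ (∀ n, g n ≤ Nat.nth (b · = true) n) ∧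
      HasGammaSelection 𝒰 (range e ∪ {x | x ≤ᶠ[atTop] b}) := by
  have hW : ∀ k L, ∃ C ∈ 𝒰 k, zeroFrom L ∪ e '' Iic k ⊆ C := fun k L =>
    (h𝒰 k).2 _ ((zeroFrom_finite L).union ((finite_Iic k).image e))
      (union_subset_union (zeroFrom_subset_finiteSupport L) (image_subset_range e _))
  choose W hW𝒰 hWsub using hW
  choose M hM using fun k L => exists_cylinder_subset_of_mem_cylinderSets ((h𝒰 k).1 (hW𝒰 k L))
  have hnext : ∀ k p, ∃ q, a q = true ∧ p < q ∧ g k ≤ q ∧ M k (p + k + 1) ≤ q := fun k p =>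
    (ha.and_eventually ((eventually_gt_atTop p).and
      ((eventually_ge_atTop _).and (eventually_ge_atTop _)))).exists
  choose next hnext_a hnext_gt hnext_g hnext_M using hnext
  -- `b = {m 1, m 2, …}` and level `k` selects `W k (m k + k + 1)`, a cylinder set of depth
  -- at most `m (k + 1)`: for large `k`, below that depth a point `x ⊆* b` agrees with a point
  -- vanishing from `m k + k + 1`.
  let m : ℕ → ℕ := fun k => Nat.rec 0 next k
  have hm : StrictMono m := strictMono_nat_of_lt_succ fun k => hnext_gt k (m k)
  have hφ : StrictMono fun k => m (k + 1) := hm.comp fun _ _ => Nat.succ_lt_succ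
  refine ⟨rangeIndicator fun k => m (k + 1), fun n => Bool.le_iff_imp.2 fun hn => ?_,
    frequently_rangeIndicator hφ, fun n => (nth_rangeIndicator hφ n).symm ▸ hnext_g n (m n),
    fun k => W k (m k + k + 1), fun k => hW𝒰 _ _, ?_⟩
  · obtain ⟨k, rfl⟩ := rangeIndicator_eq_true.1 hn
    exact hnext_a k (m k)
  rintro x (⟨i, rfl⟩ | hx)
  · filter_upwards [eventually_ge_atTop i] with k hk
    exact hWsub _ _ (Or.inr ⟨i, hk, rfl⟩)
  obtain ⟨N, hN⟩ := eventually_atTop.1 hx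
  filter_upwards [eventually_ge_atTop N] with k hk
  refine mem_of_zeroFrom_subset (hM k _) (subset_union_left.trans (hWsub k _))
    fun n hLn hnM => Bool.eq_false_iff.2 fun hxn => ?_
  obtain ⟨t, rfl⟩ := rangeIndicator_eq_true.1 (Bool.le_iff_imp.1 (hN n (by omega)) hxn)
  have htk : t < k := Nat.succ_lt_succ_iff.1 (hm.lt_iff_lt.1 (hnM.trans_le (hnext_M k (m k))))
  have := hm.monotone (show t + 1 ≤ k from htk)
  dsimp only at hLn
  omega

def IsTowerExtension {ι : Type*} (t : ι → ℕ → Bool) (g : ℕ → ℕ)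
    (𝒰 : ℕ → Set (Set (ℕ → Bool))) (b : ℕ → Bool) : Prop :=
  (∃ᶠ n in atTop, b n = true) ∧ (∀ i, b ≤ᶠ[atTop] t i) ∧
    (∀ n, g n ≤ Nat.nth (b · = true) n) ∧
    ((∀ n, IsCylinderOmegaCover (𝒰 n) (finiteSupport ∪ range t)) →
      HasGammaSelection 𝒰 (finiteSupport ∪ range t ∪ {x | x ≤ᶠ[atTop] b}))

lemma IsTower.exists_isTowerExtension {ι : Type*} [Preorder ι] [IsDirectedOrder ι] [Countable ι]
    {t : ι → ℕ → Bool} (ht : IsTower t) (g : ℕ → ℕ) (𝒰 : ℕ → Set (Set (ℕ → Bool))) :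
    ∃ b, IsTowerExtension t g 𝒰 b := by
  obtain ⟨a, ha, hat⟩ := ht.exists_frequently_eventuallyLE
  obtain ⟨e, he⟩ := (finiteSupport_countable.union (countable_range t)).exists_eq_range
    ⟨fun _ => false, Or.inl (by simp [finiteSupport])⟩
  have hA : finiteSupport ∪ range e = finiteSupport ∪ range t := by
    rw [← he, ← union_assoc, union_self]
  by_cases h𝒰 : ∀ n, IsCylinderOmegaCover (𝒰 n) (finiteSupport ∪ range t)
  · obtain ⟨b, hba, hb, hbg, hsel⟩ := exists_le_hasGammaSelection (hA ▸ h𝒰) ha g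
    exact ⟨b, hb, fun i => EventuallyLE.trans (Eventually.of_forall hba) (hat i), hbg,
      fun _ => he ▸ hsel⟩
  · obtain ⟨b, hba, hb, hbg, -⟩ := exists_le_hasGammaSelection
      (𝒰 := fun _ => {univ}) (e := e) (fun _ => isCylinderOmegaCover_univ _) ha g
    exact ⟨b, hb, fun i => EventuallyLE.trans (Eventually.of_forall hba) (hat i), hbg,
      (absurd · h𝒰)⟩

section Transfinite

variable {κ : Type*} [LinearOrder κ] [WellFoundedLT κ] (hκ : ∀ i : κ, (Iio i).Countable)
  (g : κ → ℕ → ℕ) (𝒮 : κ → ℕ → Set (Set (ℕ → Bool)))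

open Classical in
noncomputable def tower : κ → ℕ → Bool :=
  wellFounded_lt.fix fun i prev =>
    have : Countable (Iio i) := (hκ i).to_subtype
    if ht : IsTower fun j : Iio i => prev j j.2 then
      (ht.exists_isTowerExtension (g i) (𝒮 i)).choose
    else fun _ => false

open Classical in
lemma tower_eq (i : κ) : tower hκ g 𝒮 i =
    have : Countable (Iio i) := (hκ i).to_subtype
    if ht : IsTower fun j : Iio i => tower hκ g 𝒮 j then
      (ht.exists_isTowerExtension (g i) (𝒮 i)).choose
    else fun _ => false :=
  wellFounded_lt.fix_eq _ i

lemma isTowerExtension_tower (i : κ) :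
    IsTowerExtension (fun j : Iio i => tower hκ g 𝒮 j) (g i) (𝒮 i) (tower hκ g 𝒮 i) := by
  induction i using WellFoundedLT.induction with
  | _ i ih =>
  have : Countable (Iio i) := (hκ i).to_subtype
  have ht : IsTower fun j : Iio i => tower hκ g 𝒮 j := by
    refine ⟨fun j => (ih j j.2).1, fun j j' hjj' => ?_⟩
    rcases hjj'.eq_or_lt with rfl | h
    · exact EventuallyLE.refl _ _
    · exact (ih j' j'.2).2.1 ⟨j, h⟩
  rw [tower_eq, dif_pos ht]
  exact (ht.exists_isTowerExtension (g i) (𝒮 i)).choose_spec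

lemma isTower_tower : IsTower (tower hκ g 𝒮) := by
  refine ⟨fun i => (isTowerExtension_tower hκ g 𝒮 i).1, fun j i hji => ?_⟩
  rcases hji.eq_or_lt with rfl | h
  · exact EventuallyLE.refl _ _
  · exact (isTowerExtension_tower hκ g 𝒮 i).2.1 ⟨j, h⟩

lemma s1OmegaGamma_finiteSupport_union_range_tower
    (h𝒮 : ∀ 𝒰 : ℕ → Set (Set (ℕ → Bool)), (∀ n, 𝒰 n ⊆ cylinderSets) → ∃ i, 𝒮 i = 𝒰) :
    S1OmegaGamma ↥(finiteSupport ∪ range (tower hκ g 𝒮)) := by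
  refine s1OmegaGamma_of_hasGammaSelection fun 𝒰 h𝒰 => ?_
  obtain ⟨i, rfl⟩ := h𝒮 𝒰 fun n => (h𝒰 n).1
  have hsub : finiteSupport ∪ range (fun j : Iio i => tower hκ g 𝒮 j) ⊆
      finiteSupport ∪ range (tower hκ g 𝒮) :=
    union_subset_union_right _ (range_subset_iff.2 fun j => mem_range_self _)
  refine ((isTowerExtension_tower hκ g 𝒮 i).2.2.2 fun n => (h𝒰 n).mono hsub).mono ?_
  rintro x (hx | ⟨j, rfl⟩)
  · exact Or.inl (Or.inl hx)
  · rcases lt_or_ge j i with h | h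
    · exact Or.inl (Or.inr ⟨⟨j, h⟩, rfl⟩)
    · exact Or.inr ((isTower_tower hκ g 𝒮).2 h)

lemma exists_mem_range_tower_le_nth (hg : Surjective g) (f : ℕ → ℕ) :
    ∃ x ∈ range (tower hκ g 𝒮), ∀ n, f n ≤ Nat.nth (x · = true) n := by
  obtain ⟨i, rfl⟩ := hg f
  exact ⟨_, mem_range_self i, (isTowerExtension_tower hκ g 𝒮 i).2.2.1⟩

end Transfinite

end Towers

section ContinuumHypothesis

open Cardinal

lemma continuum_eq_aleph_one_of_two_power_aleph0 (hCH : (2 : Cardinal.{u}) ^ ℵ₀ = ℵ₁) :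
    𝔠 = (ℵ₁ : Cardinal.{0}) :=
  lift_injective.{u} (by simpa [two_power_aleph0] using hCH)

lemma countable_Iio_toType_aleph_one (i : (ℵ₁ : Cardinal.{0}).ord.ToType) : (Iio i).Countable :=
  le_aleph0_iff_set_countable.1 (lt_aleph_one_iff.1 (by simpa using mk_Iio_lt i))

lemma exists_surjective_toType_aleph_one (hCH : 𝔠 = (ℵ₁ : Cardinal.{0})) {α : Type} [Nonempty α]
    (hα : #α ≤ 𝔠) : ∃ f : (ℵ₁ : Cardinal.{0}).ord.ToType → α, Surjective f := by
  obtain ⟨e⟩ := (le_def _ _).1 (hα.trans_eq (hCH.trans (mk_ord_toType _).symm))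
  exact ⟨invFun e, invFun_surjective e.injective⟩

lemma mk_nat_arrow_le_continuum {β : Type} (hβ : #β ≤ 𝔠) : #(ℕ → β) ≤ 𝔠 := by
  rw [← power_def, mk_nat]
  exact (power_le_power_right hβ).trans_eq continuum_power_aleph0

lemma exists_s1OmegaGamma_finiteSupport_union (hCH : 𝔠 = (ℵ₁ : Cardinal.{0})) :
    ∃ T : Set (ℕ → Bool), (∀ x ∈ T, ∃ᶠ n in atTop, x n = true) ∧
      (∀ g : ℕ → ℕ, ∃ x ∈ T, ∀ n, g n ≤ Nat.nth (x · = true) n) ∧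
      S1OmegaGamma ↥(finiteSupport ∪ T) := by
  obtain ⟨g, hg⟩ := exists_surjective_toType_aleph_one hCH (α := ℕ → ℕ)
    (mk_nat_arrow_le_continuum (mk_nat ▸ aleph0_le_continuum))
  obtain ⟨𝒮, h𝒮⟩ := exists_surjective_toType_aleph_one hCH (α := ℕ → Set cylinderSets)
    (mk_nat_arrow_le_continuum (by
      rw [mk_set, ← two_power_aleph0]
      exact power_le_power_left two_ne_zero cylinderSets_countable.le_aleph0))
  have h𝒮' : ∀ 𝒰 : ℕ → Set (Set (ℕ → Bool)), (∀ n, 𝒰 n ⊆ cylinderSets) →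
      ∃ i, (fun n => (↑) '' 𝒮 i n) = 𝒰 := fun 𝒰 h𝒰 => by
    obtain ⟨i, hi⟩ := h𝒮 fun n => (↑) ⁻¹' 𝒰 n
    exact ⟨i, funext fun n => by simp [hi, h𝒰 n]⟩
  have hκ := countable_Iio_toType_aleph_one
  exact ⟨_, forall_mem_range.2 (isTower_tower hκ g _).1, exists_mem_range_tower_le_nth hκ g _ hg,
    s1OmegaGamma_finiteSupport_union_range_tower hκ g _ h𝒮'⟩

end ContinuumHypothesis

/-- Under CH there is a set of reals satisfying `S1(Ω,Γ)` with a countable subset whose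
removal destroys even the Menger property; in particular, none of the properties between
`S1(Ω,Γ)` and `Ufin(O,O)` is hereditary. -/
theorem s1OmegaGamma_not_hereditary
    (hCH : (2 : Cardinal) ^ Cardinal.aleph0 = Cardinal.aleph 1) :
    ∃ (X Q : Set ℝ), Q ⊆ X ∧ Q.Countable ∧ S1OmegaGamma X ∧
      ¬ UfinOO (X \ Q : Set ℝ) := by
  obtain ⟨T, hT, hdom, hS1⟩ :=
    exists_s1OmegaGamma_finiteSupport_union (continuum_eq_aleph_one_of_two_power_aleph0 hCH)
  have hι : Topology.IsEmbedding ((↑) ∘ cantorSetHomeomorphNatToBool.symm : (ℕ → Bool) → ℝ) :=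
    Topology.IsEmbedding.subtypeVal.comp cantorSetHomeomorphNatToBool.symm.isEmbedding
  have hdisj : finiteSupport ∩ T ⊆ ∅ := fun x hx =>
    notMem_finiteSupport_of_frequently (hT x hx.2) hx.1
  refine ⟨_ '' (finiteSupport ∪ T), _ '' finiteSupport, image_mono subset_union_left,
    finiteSupport_countable.image _,
    hS1.of_surjective (hι.homeomorphImage _).continuous (hι.homeomorphImage _).surjective, ?_⟩
  rw [← image_sdiff hι.injective, union_sdiff_cancel_left hdisj]
  exact fun h => not_ufinOO_of_forall_le_nth hT hdom
    (h.of_surjective (hι.homeomorphImage T).symm.continuous (hι.homeomorphImage T).symm.surjective)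
end

section
/- Assume that there exists a strongly unbounded set A ⊆ ℕ^ℕ of cardinality non(SMZ). Then there exist a strongly null set X ⊆ ℝ and a continuous function F : X → ℝ such that the image F[X] is not strongly null. -/
open Filter Set

/-- A set of reals is strongly null (has strong measure zero) if for every sequence of
positive reals `ε n` it can be covered by sets `I n` with `diam (I n) < ε n`. -/
def StronglyNull (X : Set ℝ) : Prop :=
  ∀ ε : ℕ → ℝ, (∀ n, 0 < ε n) →
    ∃ I : ℕ → Set ℝ, (∀ n, EMetric.diam (I n) < ENNReal.ofReal (ε n)) ∧ X ⊆ ⋃ n, I n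

/-- A subset of the Baire space is strongly unbounded if for each `f`, the set of its
members `≤*`-below `f` has cardinality strictly smaller than the whole set. -/
def StronglyUnbounded (A : Set (ℕ → ℕ)) : Prop :=
  ∀ f : ℕ → ℕ, Cardinal.mk {g : ℕ → ℕ // g ∈ A ∧ LeStar g f} < Cardinal.mk A

/-- `non(SMZ)`: the minimal cardinality of a set of reals that is not strongly null. -/
noncomputable def nonSMZ : Cardinal :=
  sInf { c : Cardinal | ∃ X : Set ℝ, ¬ StronglyNull X ∧ Cardinal.mk X = c }

/-!
Let `Y` be a set of reals of size `non(SMZ)` that is not strongly null, and index it as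
`(y f)_{f ∈ A}`. The point `x f` writes, in base 5, the binary digits of `sigmoid (y f)` at the
positions of a strictly increasing majorant `T f` of `f`, and zeros elsewhere. Nearby codes share
a long digit prefix, hence the positions `T f` up to some index and the corresponding bits, so
`x f ↦ y f` is continuous on `X = {x f}`, with image `Y`.

`X` is strongly null: given `ε`, choose window lengths `N` such that all reals whose digits vanish
on `[a, N a)` for some `a` are covered by sets of the prescribed sizes. Every `T f` escaping the
bound `g` built from `N` leaves such a window empty, and the remaining `f` satisfy `f ≤* g`, so
there are fewer than `non(SMZ)` of them and their codes form a strongly null set.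
-/

open Function Cardinal

open MeasureTheory in
theorem not_stronglyNull_univ : ¬ StronglyNull univ := by
  intro h
  obtain ⟨I, hI, hcov⟩ := h (fun n => (1 / 2 : ℝ) ^ n) fun n => by positivity
  have : volume (univ : Set ℝ) ≤ ENNReal.ofReal (∑' n : ℕ, (1 / 2 : ℝ) ^ n) :=
    calc volume (univ : Set ℝ)
        ≤ volume (⋃ n, I n) := measure_mono hcov
      _ ≤ ∑' n, volume (I n) := measure_iUnion_le I
      _ ≤ ∑' n : ℕ, ENNReal.ofReal ((1 / 2 : ℝ) ^ n) :=
          ENNReal.tsum_le_tsum fun n => (Real.volume_le_diam _).trans (hI n).le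
      _ = _ := (ENNReal.ofReal_tsum_of_nonneg (fun n => by positivity) summable_geometric_two).symm
  simp at this

theorem exists_not_stronglyNull_mk_eq_nonSMZ :
    ∃ Y : Set ℝ, ¬ StronglyNull Y ∧ #Y = nonSMZ :=
  csInf_mem (s := { c : Cardinal | ∃ X : Set ℝ, ¬ StronglyNull X ∧ #X = c })
    ⟨_, univ, not_stronglyNull_univ, rfl⟩

theorem StronglyNull.of_mk_lt_nonSMZ {Z : Set ℝ} (h : #Z < nonSMZ) : StronglyNull Z := by
  by_contra hZ
  exact h.not_ge (csInf_le' ⟨Z, hZ, rfl⟩)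

theorem StronglyNull.of_forall_countable_cover {E : Type*} [Countable E] {X : Set ℝ}
    (h : ∀ δ : E → ℝ, (∀ e, 0 < δ e) → ∃ P : E → Set ℝ,
      (∀ e, Metric.ediam (P e) < ENNReal.ofReal (δ e)) ∧ X ⊆ ⋃ e, P e) :
    StronglyNull X := by
  intro ε hε
  obtain ⟨ι, hι⟩ := Countable.exists_injective_nat E
  obtain ⟨P, hP, hXP⟩ := h (ε ∘ ι) fun e => hε _
  refine ⟨extend ι P fun _ => ∅, fun n => ?_, fun x hx => ?_⟩
  · by_cases hn : ∃ e, ι e = n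
    · obtain ⟨e, rfl⟩ := hn
      rw [hι.extend_apply]
      exact hP e
    · rw [extend_apply' _ _ _ hn]
      exact Metric.ediam_empty.trans_lt (ENNReal.ofReal_pos.2 (hε n))
  · obtain ⟨e, he⟩ := mem_iUnion.1 (hXP hx)
    exact mem_iUnion.2 ⟨ι e, by rwa [hι.extend_apply]⟩

namespace Real

theorem inv_pow_le_abs_ofDigits_sub_ofDigits {b : ℕ} {x y : ℕ → Fin b} {q : ℕ}
    (hxy : ∀ i < q, x i = y i) (hq : (x q : ℕ) + 2 ≤ y q ∨ (y q : ℕ) + 2 ≤ x q) :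
    ((b : ℝ) ^ (q + 1))⁻¹ ≤ |ofDigits x - ofDigits y| := by
  wlog hlt : (x q : ℕ) + 2 ≤ y q generalizing x y
  · rw [abs_sub_comm]
    exact this (fun i hi => (hxy i hi).symm) hq.symm (hq.resolve_left hlt)
  have hsplit : ∀ z : ℕ → Fin b, ofDigits z = ∑ i ∈ Finset.range q, ofDigitsTerm z i
      + z q * ((b : ℝ) ^ (q + 1))⁻¹ + ((b : ℝ) ^ (q + 1))⁻¹ * ofDigits (fun i => z (i + (q + 1))) :=
    fun z => by rw [ofDigits_eq_sum_add_ofDigits z (q + 1), Finset.sum_range_succ, ofDigitsTerm]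
  have hprefix : ∑ i ∈ Finset.range q, ofDigitsTerm x i = ∑ i ∈ Finset.range q, ofDigitsTerm y i :=
    Finset.sum_congr rfl fun i hi => by simp only [ofDigitsTerm, hxy i (Finset.mem_range.1 hi)]
  have hx := ofDigits_le_one fun i => x (i + (q + 1))
  have hy := ofDigits_nonneg fun i => y (i + (q + 1))
  have hq' : (x q : ℝ) + 2 ≤ y q := by exact_mod_cast hlt
  have hc : 0 < ((b : ℝ) ^ (q + 1))⁻¹ := by have := Fin.pos (x 0); positivity
  rw [abs_sub_comm, le_abs]
  left
  rw [hsplit x, hsplit y, hprefix]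
  nlinarith

theorem eq_of_abs_ofDigits_sub_lt {b : ℕ} {x y : ℕ → Fin b} (hx : ∀ i, Even (x i : ℕ))
    (hy : ∀ i, Even (y i : ℕ)) {n : ℕ} (h : |ofDigits x - ofDigits y| < ((b : ℝ) ^ (n + 1))⁻¹) :
    ∀ i ≤ n, x i = y i := by
  intro i
  induction i using Nat.strong_induction_on with
  | _ i ih =>
    intro hi
    by_contra hne
    have hgap : (x i : ℕ) + 2 ≤ y i ∨ (y i : ℕ) + 2 ≤ x i := by
      obtain ⟨k, hk⟩ := hx i
      obtain ⟨l, hl⟩ := hy i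
      have : (x i : ℕ) ≠ y i := fun h => hne (Fin.ext h)
      omega
    have hb : (1 : ℝ) ≤ b := by exact_mod_cast Fin.pos (x 0)
    have : ((b : ℝ) ^ (n + 1))⁻¹ ≤ ((b : ℝ) ^ (i + 1))⁻¹ :=
      inv_anti₀ (by positivity) (pow_le_pow_right₀ hb (by omega))
    have := inv_pow_le_abs_ofDigits_sub_ofDigits (fun j hj => ih j hj (by omega)) hgap
    linarith

theorem ediam_ofDigits_image_le {b : ℕ} (w : ℕ → Fin b) (n : ℕ) :
    Metric.ediam (ofDigits '' {d | ∀ i < n, d i = w i}) ≤ ENNReal.ofReal ((b : ℝ) ^ n)⁻¹ := by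
  refine Metric.ediam_le_of_forall_dist_le ?_
  rintro _ ⟨x, hx, rfl⟩ _ ⟨y, hy, rfl⟩
  rw [Real.dist_eq]
  exact abs_ofDigits_sub_ofDigits_le fun i hi => (hx i hi).trans (hy i hi).symm

theorem abs_sub_le_of_digits_eq {b : ℕ} [NeZero b] (hb : 1 < b) {x y : ℝ} (hx : x ∈ Ico 0 1)
    (hy : y ∈ Ico 0 1) {n : ℕ} (h : ∀ i < n, digits x b i = digits y b i) :
    |x - y| ≤ ((b : ℝ) ^ n)⁻¹ := by
  simpa only [ofDigits_digits hb hx, ofDigits_digits hb hy] using abs_ofDigits_sub_ofDigits_le h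

theorem injOn_digits {b : ℕ} [NeZero b] (hb : 1 < b) : InjOn (digits · b) (Ico 0 1) :=
  fun x hx y hy h => by
    rw [← ofDigits_digits hb hx, ← ofDigits_digits hb hy]
    exact congrArg ofDigits h

end Real

theorem StrictMono.count_mem_range {s : ℕ → ℕ} (hs : StrictMono s) [DecidablePred (· ∈ range s)]
    (i : ℕ) : Nat.count (· ∈ range s) (s i) = i := by
  have himage : {x ∈ Finset.range (s i) | x ∈ range s} = (Finset.range i).image s := by
    ext x
    simp only [Finset.mem_filter, Finset.mem_range, Finset.mem_image, mem_range]
    constructor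
    · rintro ⟨hx, j, rfl⟩
      exact ⟨j, hs.lt_iff_lt.1 hx, rfl⟩
    · rintro ⟨j, hj, rfl⟩
      exact ⟨hs hj, j, rfl⟩
  rw [Nat.count_eq_card_filter_range, himage, Finset.card_image_of_injective _ hs.injective,
    Finset.card_range]

theorem StrictMono.apply_eq_of_range_agree {s t : ℕ → ℕ} (hs : StrictMono s) (ht : StrictMono t)
    {i : ℕ} (h : ∀ p ≤ s i, p ∈ range s ↔ p ∈ range t) : s i = t i := by
  classical
  obtain ⟨j, hj⟩ := (h (s i) le_rfl).1 ⟨i, rfl⟩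
  have hcount : Nat.count (· ∈ range s) (s i) = Nat.count (· ∈ range t) (s i) := by
    simp only [Nat.count_eq_card_filter_range]
    exact congrArg Finset.card (Finset.filter_congr fun p hp => h p (Finset.mem_range.1 hp).le)
  rw [hs.count_mem_range, ← hj, ht.count_mem_range] at hcount
  rw [← hj, hcount]

open Classical in
/-- All digits are even, so two codes whose digits first differ at position `q` are at least
`5⁻¹ ^ (q + 1)` apart (`Real.inv_pow_le_abs_ofDigits_sub_ofDigits`). -/
noncomputable def markedDigits (T : ℕ → ℕ) (β : ℕ → Fin 2) (p : ℕ) : Fin 5 :=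
  if p ∈ range T then ⟨2 + 2 * β (invFun T p), by have := (β (invFun T p)).isLt; omega⟩ else 0

section markedDigits

variable {T : ℕ → ℕ} {β : ℕ → Fin 2}

theorem even_markedDigits (p : ℕ) : Even (markedDigits T β p : ℕ) := by
  unfold markedDigits
  split_ifs
  · exact ⟨1 + β (invFun T p), by simp only; ring⟩
  · simp

theorem markedDigits_of_notMem {p : ℕ} (hp : p ∉ range T) : markedDigits T β p = 0 := by
  rw [markedDigits, if_neg hp]

theorem markedDigits_eq_zero_iff {p : ℕ} : markedDigits T β p = 0 ↔ p ∉ range T := by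
  refine ⟨fun h hp => ?_, markedDigits_of_notMem⟩
  rw [markedDigits, if_pos hp] at h
  exact absurd (congrArg Fin.val h) (by simp)

theorem val_markedDigits_apply (hT : Injective T) (n : ℕ) :
    (markedDigits T β (T n) : ℕ) = 2 + 2 * β n := by
  simp [markedDigits, leftInverse_invFun hT n]

theorem eq_of_markedDigits_eq {S : ℕ → ℕ} {γ : ℕ → Fin 2} (hT : StrictMono T) (hS : StrictMono S)
    {n : ℕ} (h : ∀ p ≤ T n, markedDigits T β p = markedDigits S γ p) : ∀ i ≤ n, β i = γ i := by
  intro i hi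
  have hTi : T i ≤ T n := hT.monotone hi
  have hrange : ∀ p ≤ T i, p ∈ range T ↔ p ∈ range S := fun p hp => by
    rw [← not_iff_not, ← markedDigits_eq_zero_iff (β := β), ← markedDigits_eq_zero_iff (β := γ),
      h p (hp.trans hTi)]
  have hdigit := congrArg Fin.val (h (T i) hTi)
  rw [val_markedDigits_apply hT.injective, hT.apply_eq_of_range_agree hS hrange,
    val_markedDigits_apply hS.injective] at hdigit
  exact Fin.ext (by omega)

end markedDigits

noncomputable def markedReal (T : ℕ → ℕ) (β : ℕ → Fin 2) : ℝ := Real.ofDigits (markedDigits T β)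

theorem eq_of_abs_markedReal_sub_lt {T S : ℕ → ℕ} {β γ : ℕ → Fin 2} (hT : StrictMono T)
    (hS : StrictMono S) {n : ℕ}
    (h : |markedReal T β - markedReal S γ| < ((5 : ℝ) ^ (T n + 1))⁻¹) : ∀ i ≤ n, β i = γ i :=
  eq_of_markedDigits_eq hT hS fun p hp =>
    Real.eq_of_abs_ofDigits_sub_lt even_markedDigits even_markedDigits (by exact_mod_cast h) p hp

theorem eq_of_markedReal_eq {T S : ℕ → ℕ} {β γ : ℕ → Fin 2} (hT : StrictMono T)
    (hS : StrictMono S) (h : markedReal T β = markedReal S γ) : β = γ :=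
  funext fun i => eq_of_abs_markedReal_sub_lt hT hS (n := i)
    (by rw [h, sub_self, abs_zero]; positivity) i le_rfl

theorem Real.sigmoid_mem_Ico (x : ℝ) : Real.sigmoid x ∈ Ico 0 1 :=
  ⟨Real.sigmoid_nonneg x, Real.sigmoid_lt_one x⟩

section pairCode

open Real

variable {ι : Type*} (T : ι → ℕ → ℕ) (y : ι → ℝ)

/-- `sigmoid` embeds `ℝ` into `[0, 1)`, where a point depends continuously on its binary digits. -/
noncomputable def pairCode (i : ι) : ℝ :=
  markedReal (T i) (digits (sigmoid (y i)) 2)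

variable {T}

theorem abs_sigmoid_sub_le_of_abs_pairCode_sub_lt (hT : ∀ i, StrictMono (T i)) {i j : ι} {n : ℕ}
    (h : |pairCode T y i - pairCode T y j| < ((5 : ℝ) ^ (T i n + 1))⁻¹) :
    |sigmoid (y i) - sigmoid (y j)| ≤ ((2 : ℝ) ^ (n + 1))⁻¹ := by
  have hbits := eq_of_abs_markedReal_sub_lt (hT i) (hT j) h
  exact_mod_cast abs_sub_le_of_digits_eq one_lt_two (sigmoid_mem_Ico _) (sigmoid_mem_Ico _)
    fun k hk => hbits k (Nat.lt_succ_iff.1 hk)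

theorem apply_eq_of_pairCode_eq (hT : ∀ i, StrictMono (T i)) {i j : ι}
    (h : pairCode T y i = pairCode T y j) : y i = y j :=
  sigmoid_injective <| injOn_digits one_lt_two (sigmoid_mem_Ico _) (sigmoid_mem_Ico _) <|
    eq_of_markedReal_eq (hT i) (hT j) h

theorem exists_continuous_range_eq_of_pairCode (hT : ∀ i, StrictMono (T i)) :
    ∃ F : range (pairCode T y) → ℝ, Continuous F ∧ range F = range y := by
  let F : range (pairCode T y) → ℝ := fun x => y x.2.choose
  have hF : ∀ i, F ⟨pairCode T y i, i, rfl⟩ = y i := fun i =>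
    apply_eq_of_pairCode_eq y hT <|
      Exists.choose_spec (p := fun j => pairCode T y j = pairCode T y i) ⟨i, rfl⟩
  refine ⟨F, ?_, ?_⟩
  · have hσ : Topology.IsEmbedding sigmoid :=
      sigmoid_strictMono.isEmbedding_of_ordConnected (range_sigmoid ▸ ordConnected_Ioo)
    refine hσ.continuous_iff.2 (Metric.continuous_iff.2 fun ⟨_, i, rfl⟩ ε hε => ?_)
    obtain ⟨n, hn⟩ := exists_pow_lt_of_lt_one hε (show (2 : ℝ)⁻¹ < 1 by norm_num)
    refine ⟨((5 : ℝ) ^ (T i n + 1))⁻¹, by positivity, fun ⟨_, j, rfl⟩ hij => ?_⟩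
    rw [Subtype.dist_eq, dist_eq, abs_sub_comm] at hij
    rw [dist_eq, comp_apply, comp_apply, hF, hF, abs_sub_comm]
    calc |sigmoid (y i) - sigmoid (y j)| ≤ ((2 : ℝ) ^ (n + 1))⁻¹ :=
          abs_sigmoid_sub_le_of_abs_pairCode_sub_lt y hT hij
      _ < ε := by
          rw [← inv_pow]
          exact (pow_le_pow_of_le_one (by norm_num) (by norm_num) n.le_succ).trans_lt hn
  · refine (range_subset_iff.2 fun _ => mem_range_self _).antisymm (range_subset_iff.2 fun i => ?_)
    exact ⟨_, hF i⟩

end pairCode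

theorem Real.exists_gap_cover {b : ℕ} [NeZero b] (hb : 1 < b) {δ : (Σ a, Fin a → Fin b) → ℝ}
    (hδ : ∀ e, 0 < δ e) :
    ∃ N : ℕ → ℕ, (∀ a, a ≤ N a) ∧ ∃ P : (Σ a, Fin a → Fin b) → Set ℝ,
      (∀ e, Metric.ediam (P e) < ENNReal.ofReal (δ e)) ∧
      ∀ (d : ℕ → Fin b) (a : ℕ), (∀ p, a ≤ p → p < N a → d p = 0) →
        Real.ofDigits d ∈ ⋃ e, P e := by
  have hsmall : ∀ e, ∃ k : ℕ, ((b : ℝ) ^ k)⁻¹ < δ e := fun e => by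
    simpa only [inv_pow] using
      exists_pow_lt_of_lt_one (hδ e) (inv_lt_one_of_one_lt₀ (by exact_mod_cast hb))
  choose k hk using hsmall
  let N a := a + Finset.univ.sup fun w : Fin a → Fin b => k ⟨a, w⟩
  let P : (Σ a, Fin a → Fin b) → Set ℝ := fun e => Real.ofDigits ''
    {d | ∀ i < N e.1, d i = if h : i < e.1 then e.2 ⟨i, h⟩ else 0}
  refine ⟨N, fun a => Nat.le_add_right _ _, P, fun ⟨a, w⟩ => ?_, fun d a hd => ?_⟩
  · have hkN : k ⟨a, w⟩ ≤ N a :=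
      (Finset.le_sup (f := fun w => k ⟨a, w⟩) (Finset.mem_univ w)).trans (Nat.le_add_left _ _)
    refine (Real.ediam_ofDigits_image_le _ _).trans_lt ((ENNReal.ofReal_lt_ofReal_iff (hδ _)).2 ?_)
    exact (inv_anti₀ (by positivity) (pow_le_pow_right₀ (by exact_mod_cast hb.le) hkN)).trans_lt
      (hk _)
  · refine mem_iUnion.2 ⟨⟨a, fun i => d i⟩, d, fun i hi => ?_, rfl⟩
    split_ifs with hia
    · rfl
    · exact hd i (not_lt.1 hia) hi

def gapEnds (N : ℕ → ℕ) : ℕ → ℕ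
  | 0 => 0
  | i + 1 => N (gapEnds N i + 1)

theorem gapEnds_monotone {N : ℕ → ℕ} (hN : ∀ a, a ≤ N a) : Monotone (gapEnds N) :=
  monotone_nat_of_le_succ fun _ => (Nat.le_succ _).trans (hN _)

theorem exists_Ioo_disjoint_range {u T : ℕ → ℕ} (hu : Monotone u) (hT : StrictMono T) {n : ℕ}
    (hn : u (n + 1) < T n) : ∃ i, ∀ k, T k ∉ Ioo (u i) (u (i + 1)) := by
  by_contra! h
  choose k hk using h
  have hk_mono : StrictMono k := fun i j hij =>
    hT.lt_iff_lt.1 <| (hk i).2.trans_le ((hu hij).trans (hk j).1.le)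
  exact absurd (hk n).2 (not_lt.2 (hn.le.trans (hT.monotone (hk_mono.id_le n))))

theorem stronglyNull_range_markedReal {ι : Type*} {T : ι → ℕ → ℕ} (hT : ∀ i, StrictMono (T i))
    (β : ι → ℕ → Fin 2)
    (hsmall : ∀ g, StronglyNull ((fun i => markedReal (T i) (β i)) '' {i | LeStar (T i) g})) :
    StronglyNull (range fun i => markedReal (T i) (β i)) := by
  refine StronglyNull.of_forall_countable_cover (E := (Σ a, Fin a → Fin 5) ⊕ ℕ) fun δ hδ => ?_
  obtain ⟨N, hN, P, hP, hcover⟩ := Real.exists_gap_cover (b := 5) (by norm_num) fun e => hδ (.inl e)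
  let g n := gapEnds N (n + 1)
  obtain ⟨J, hJ, hZJ⟩ := hsmall g (δ ∘ .inr) fun n => hδ _
  refine ⟨Sum.elim P J, Sum.rec hP hJ, ?_⟩
  rintro _ ⟨i, rfl⟩
  rw [iUnion_sum]
  by_cases hi : LeStar (T i) g
  · exact Or.inr (hZJ ⟨i, hi, rfl⟩)
  -- `T i` escapes `g`, so a window `(gapEnds N k, N (gapEnds N k + 1))` misses its range and
  -- the code of `i` has there the run of zeros that `Real.exists_gap_cover` asks for.
  · obtain ⟨n, hn⟩ := (Filter.not_eventually.1 hi).exists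
    obtain ⟨k, hk⟩ := exists_Ioo_disjoint_range (gapEnds_monotone hN) (hT i) (not_le.1 hn)
    refine Or.inl (hcover _ (gapEnds N k + 1) fun p hp hpN => markedDigits_of_notMem ?_)
    rintro ⟨m, rfl⟩
    exact hk m ⟨hp, hpN⟩

def majorant (f : ℕ → ℕ) (n : ℕ) : ℕ := ∑ i ∈ Finset.range (n + 1), (f i + 1)

theorem majorant_strictMono (f : ℕ → ℕ) : StrictMono (majorant f) :=
  strictMono_nat_of_lt_succ fun n => by
    simp only [majorant, Finset.sum_range_succ _ (n + 1)]
    omega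

theorem le_majorant (f : ℕ → ℕ) (n : ℕ) : f n ≤ majorant f n :=
  (Nat.le_succ _).trans <|
    Finset.single_le_sum (f := fun i => f i + 1) (fun _ _ => Nat.zero_le _)
      (Finset.self_mem_range_succ n)

theorem StronglyUnbounded.mk_setOf_leStar_lt {A : Set (ℕ → ℕ)} (hA : StronglyUnbounded A)
    (g : ℕ → ℕ) : #{f : A | LeStar f g} < #A :=
  (mk_congr (Equiv.subtypeSubtypeEquivSubtypeInter _ _)).trans_lt (hA g)

/-- If there is a strongly unbounded subset of the Baire space of cardinality `non(SMZ)`,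
then strong measure zero is not preserved by continuous images: there are a strongly null
set of reals `X` and a continuous `F : X → ℝ` whose image is not strongly null. -/
theorem smz_not_preserved_by_continuous_images
    (A : Set (ℕ → ℕ)) (hA : StronglyUnbounded A) (hcard : Cardinal.mk A = nonSMZ) :
    ∃ X : Set ℝ, StronglyNull X ∧
      ∃ F : X → ℝ, Continuous F ∧ ¬ StronglyNull (Set.range F) := by
  obtain ⟨Y, hY, hYcard⟩ := exists_not_stronglyNull_mk_eq_nonSMZ
  obtain ⟨ψ⟩ : Nonempty (A ≃ Y) := Cardinal.eq.1 (hcard.trans hYcard.symm)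
  let T (f : A) := majorant f
  let y (f : A) : ℝ := ψ f
  have hT (f : A) : StrictMono (T f) := majorant_strictMono f
  obtain ⟨F, hF, hFrange⟩ := exists_continuous_range_eq_of_pairCode y hT
  refine ⟨range (pairCode T y), stronglyNull_range_markedReal hT _ fun g => ?_, F, hF, ?_⟩
  · refine StronglyNull.of_mk_lt_nonSMZ (hcard ▸ ?_)
    calc #(_ '' {f | LeStar (T f) g}) ≤ #{f | LeStar (T f) g} := mk_image_le
      _ ≤ #{f : A | LeStar f g} :=
          mk_le_mk_of_subset fun f hf => hf.mono fun n hn => (le_majorant f n).trans hn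
      _ < #A := hA.mk_setOf_leStar_lt g
  · rwa [hFrange, show range y = Y from (ψ.surjective.range_comp _).trans Subtype.range_coe]
end

section
/- Let P be a property of metric spaces which is hereditary (if a metric space has P then every subspace has P) and is preserved under uniformly continuous images (if X has P and f : X → Y is a uniformly continuous surjection of metric spaces, then Y has P). If P is not preserved under continuous images (there exist metric spaces X, Y and a continuous surjection f : X → Y such that X has P but Y does not), then P is not preserved under homeomorphic images: there exist metric spaces Z and W, a homeomorphism from Z onto W, such that Z has P but W does not have P. -/
open Function

/-- `P` is hereditary: it passes from a metric space to each of its subspaces. -/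
def Hereditary (P : ∀ (X : Type) [MetricSpace X], Prop) : Prop :=
  ∀ (X : Type) [MetricSpace X], P X → ∀ S : Set X, P S

/-- `P` is preserved under uniformly continuous images (of metric spaces). -/
def PreservedUnderUniformlyContinuousImages (P : ∀ (X : Type) [MetricSpace X], Prop) : Prop :=
  ∀ (X Y : Type) [MetricSpace X] [MetricSpace Y] (f : X → Y),
    UniformContinuous f → Surjective f → P X → P Y

/-- `P` is preserved under continuous images (of metric spaces). -/
def PreservedUnderContinuousImages (P : ∀ (X : Type) [MetricSpace X], Prop) : Prop :=
  ∀ (X Y : Type) [MetricSpace X] [MetricSpace Y] (f : X → Y),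
    Continuous f → Surjective f → P X → P Y

/-- `P` is preserved under homeomorphic images (of metric spaces). -/
def PreservedUnderHomeomorphicImages (P : ∀ (X : Type) [MetricSpace X], Prop) : Prop :=
  ∀ (Z W : Type) [MetricSpace Z] [MetricSpace W], Nonempty (Z ≃ₜ W) → P Z → P W

/-- If a hereditary property of metric spaces is preserved under uniformly continuous
images but not under continuous images, then it is not preserved under homeomorphic
images either. -/
theorem not_preserved_under_homeomorphic_images
    (P : ∀ (X : Type) [MetricSpace X], Prop)
    (hher : Hereditary P)
    (huc : PreservedUnderUniformlyContinuousImages P)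
    (hnc : ¬ PreservedUnderContinuousImages P) :
    ¬ PreservedUnderHomeomorphicImages P := by
  intro hp
  unfold PreservedUnderContinuousImages at hnc
  push_neg at hnc
  obtain ⟨X, Y, _, _, f, hf, hsurj, hPX, hPY⟩ := hnc
  -- W is the graph of f, a subspace of X × Y
  let W := {p : X × Y // p.2 = f p.1}
  let e : X ≃ₜ W :=
    { toFun := fun x => ⟨(x, f x), rfl⟩
      invFun := fun p => p.1.1
      left_inv := fun x => rfl
      right_inv := fun p => by
        apply Subtype.ext
        exact Prod.ext rfl p.2.symm
      continuous_toFun := by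
        apply Continuous.subtype_mk
        exact continuous_id.prodMk hf
      continuous_invFun := continuous_fst.comp continuous_subtype_val }
  have hPW : P W := hp X W ⟨e⟩ hPX
  exact hPY (huc W Y (fun p => p.1.2)
    (uniformContinuous_snd.comp uniformContinuous_subtype_val)
    (fun y => by
      obtain ⟨x, hx⟩ := hsurj y
      exact ⟨⟨(x, y), hx.symm⟩, rfl⟩) hPW)
end

section
/- Let X ⊆ ℝ (with the subspace topology). Then X satisfies S1(Ω,Γ) if, and only if, X satisfies Ω → (Γ)²₂: for every open ω-cover 𝒰 of X and every coloring of the 2-element subsets of 𝒰 with 2 colors, there exist a color j and a subfamily 𝒱 ⊆ 𝒰 which is a γ-cover of X such that every 2-element subset of 𝒱 receives color j. -/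
/-!
A γ-subcover of an open ω-cover is obtained from `S1(Ω,Γ)` by selecting from the constant
sequence; Ramsey's theorem for pairs then thins it to a monochromatic family, which is still a
γ-cover because infinite subfamilies of γ-covers are γ-covers.

Conversely, `Ω → (Γ)²₂` with a constant colouring says that open ω-covers have γ-subcovers.
Given open ω-covers `𝒰ₙ` of a T₁ space with distinct points `xₙ`, the sets
`(U₀ ∩ ⋯ ∩ Uₙ) \ {xₙ}` with `Uᵢ ∈ 𝒰ᵢ` form an open ω-cover. In a γ-subcover of it each `n`
occurs only finitely often, since all those members miss `xₙ`, so arbitrarily large `n` occur,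
and the `m`-th factor of a member with `n ≥ m` selects from `𝒰ₘ` a γ-cover.
-/

open Filter Set

/-- The partition property `Ω → (Γ)²₂`: for every open `ω`-cover `𝒰` and every `2`-coloring
of the `2`-element subsets of `𝒰`, some subfamily of `𝒰` which is a `γ`-cover has all of
its `2`-element subsets of one color. -/
def OmegaRamseyGamma22 (X : Type*) [TopologicalSpace X] : Prop :=
  ∀ 𝒰 : Set (Set X), IsOpenOmegaCover 𝒰 →
    ∀ c : Finset (Set X) → Fin 2,
      ∃ (j : Fin 2) (𝒱 : Set (Set X)), 𝒱 ⊆ 𝒰 ∧ IsGammaCover 𝒱 ∧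
        ∀ s : Finset (Set X), ↑s ⊆ 𝒱 → s.card = 2 → c s = j

section Ramsey

variable {κ : Type*} [Finite κ]

lemma Set.Infinite.exists_infinite_setOf_lt_eq {S : Set ℕ} (hS : S.Infinite) (a : ℕ)
    (c : ℕ → κ) : ∃ i, {n ∈ S | a < n ∧ c n = i}.Infinite := by
  by_contra! h
  refine (hS.sdiff (finite_Iic a)) ((finite_iUnion h).subset ?_)
  rintro n ⟨hnS, hna⟩
  exact mem_iUnion.2 ⟨c n, hnS, not_le.1 hna, rfl⟩

theorem Nat.exists_infinite_homogeneous (c : ℕ → ℕ → κ) :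
    ∃ j, ∃ A : Set ℕ, A.Infinite ∧ ∀ m ∈ A, ∀ n ∈ A, m < n → c m n = j := by
  let pick : {S : Set ℕ // S.Infinite} → ℕ := fun S => S.2.nonempty.some
  choose col hcol using fun S : {S : Set ℕ // S.Infinite} =>
    S.2.exists_infinite_setOf_lt_eq (pick S) (c (pick S))
  let next : {S : Set ℕ // S.Infinite} → {S : Set ℕ // S.Infinite} := fun S => ⟨_, hcol S⟩
  let F : ℕ → {S : Set ℕ // S.Infinite} := fun k => next^[k] ⟨univ, infinite_univ⟩
  have hF_succ : ∀ k, F (k + 1) = next (F k) := fun k => Function.iterate_succ_apply' ..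
  have hF_anti : Antitone fun k => (F k).1 := antitone_nat_of_succ_le fun k => by
    rw [hF_succ]; exact fun n hn => hn.1
  have key : ∀ k l, k < l → pick (F k) < pick (F l) ∧ c (pick (F k)) (pick (F l)) = col (F k) :=
    fun k l hkl => by
      have : pick (F l) ∈ (F (k + 1)).1 := hF_anti hkl (F l).2.nonempty.some_mem
      rw [hF_succ] at this
      exact this.2
  have hmono : StrictMono fun k => pick (F k) := fun k l hkl => (key k l hkl).1
  obtain ⟨j, hj⟩ := Finite.exists_infinite_fiber fun k => col (F k)
  refine ⟨j, (fun k => pick (F k)) '' ((fun k => col (F k)) ⁻¹' {j}),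
    (infinite_coe_iff.1 hj).image hmono.injective.injOn, ?_⟩
  rintro _ ⟨k, hk, rfl⟩ _ ⟨l, -, rfl⟩ hlt
  exact (key k l (hmono.lt_iff_lt.1 hlt)).2.trans hk

theorem Set.Infinite.exists_infinite_homogeneous_pairs {α : Type*} {S : Set α}
    (hS : S.Infinite) (c : Finset α → κ) :
    ∃ j, ∃ T ⊆ S, T.Infinite ∧ ∀ s : Finset α, ↑s ⊆ T → s.card = 2 → c s = j := by
  classical
  let e : ℕ → α := fun n => hS.natEmbedding _ n
  have he : Function.Injective e := Subtype.val_injective.comp (hS.natEmbedding _).injective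
  obtain ⟨j, A, hA, hcA⟩ := Nat.exists_infinite_homogeneous fun m n => c {e m, e n}
  refine ⟨j, e '' A, image_subset_iff.2 fun n _ => (hS.natEmbedding _ n).2,
    hA.image he.injOn, fun s hs hcard => ?_⟩
  obtain ⟨a, b, hne, rfl⟩ := Finset.card_eq_two.1 hcard
  obtain ⟨m, hm, rfl⟩ := hs (Finset.mem_insert_self a {b})
  obtain ⟨n, hn, rfl⟩ := hs (Finset.mem_insert_of_mem (Finset.mem_singleton_self b))
  rcases lt_or_gt_of_ne (ne_of_apply_ne e hne) with hlt | hlt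
  · exact hcA m hm n hn hlt
  · rw [Finset.pair_comm]; exact hcA n hn m hm hlt

end Ramsey

section Covers

variable {Y : Type*}

lemma IsOmegaCover.infinite {𝒰 : Set (Set Y)} (h : IsOmegaCover 𝒰) : Infinite Y := by
  by_contra hfin
  rw [not_infinite_iff_finite] at hfin
  obtain ⟨U, hU, hsub⟩ := h.2.2 univ finite_univ
  exact h.2.1 U hU (univ_subset_iff.1 hsub)

lemma IsGammaCover.mono {𝒰 𝒱 : Set (Set Y)} (h𝒰 : IsGammaCover 𝒰) (h𝒱𝒰 : 𝒱 ⊆ 𝒰)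
    (h𝒱 : 𝒱.Infinite) : IsGammaCover 𝒱 := by
  have hmiss : ∀ y, {V ∈ 𝒱 | y ∉ V}.Finite := fun y =>
    (h𝒰.2.2 y).subset fun V hV => ⟨h𝒱𝒰 hV.1, hV.2⟩
  refine ⟨h𝒱, eq_univ_of_forall fun y => ?_, hmiss⟩
  obtain ⟨V, hV, hyV⟩ := (h𝒱.sdiff (hmiss y)).nonempty
  exact ⟨V, hV, by_contra fun hy => hyV ⟨hV, hy⟩⟩

lemma IsGammaCover.finite_setOf_not_subset {𝒱 : Set (Set Y)} (h : IsGammaCover 𝒱) {F : Set Y}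
    (hF : F.Finite) : {V ∈ 𝒱 | ¬ F ⊆ V}.Finite :=
  (hF.biUnion fun y _ => h.2.2 y).subset fun V ⟨hV, hFV⟩ => by
    obtain ⟨y, hy, hyV⟩ := not_subset.1 hFV
    exact mem_biUnion hy ⟨hV, hyV⟩

lemma isGammaCover_range {U : ℕ → Set Y} (hev : ∀ y, ∀ᶠ n in atTop, y ∈ U n)
    (hne : ∀ n, U n ≠ univ) : IsGammaCover (range U) := by
  refine ⟨fun hfin => ?_, eq_univ_of_forall fun y => ?_, fun y => ?_⟩
  · have : ∀ W : range U, ∃ y, y ∉ (W : Set Y) := by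
      rintro ⟨_, n, rfl⟩
      exact (ne_univ_iff_exists_notMem _).1 (hne n)
    choose y hy using this
    have : Finite (range U) := hfin.to_subtype
    obtain ⟨n, hn⟩ := (eventually_all.2 fun W => hev (y W)).exists
    exact hy ⟨U n, n, rfl⟩ (hn _)
  · obtain ⟨n, hn⟩ := (hev y).exists
    exact ⟨U n, mem_range_self n, hn⟩
  · have : {n | y ∉ U n}.Finite := eventually_cofinite.1 (Nat.cofinite_eq_atTop ▸ hev y)
    refine (this.image U).subset ?_
    rintro _ ⟨⟨n, rfl⟩, hy⟩
    exact ⟨n, hy, rfl⟩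

def taggedMeets (𝒰 : ℕ → Set (Set Y)) (x : ℕ → Y) : Set (Set Y) :=
  {W | ∃ n, ∃ u : ℕ → Set Y, (∀ i ≤ n, u i ∈ 𝒰 i) ∧ W = (⋂ i ∈ Iic n, u i) \ {x n}}

lemma isOpenOmegaCover_taggedMeets [TopologicalSpace Y] [T1Space Y] {𝒰 : ℕ → Set (Set Y)}
    (h𝒰 : ∀ n, IsOpenOmegaCover (𝒰 n)) {x : ℕ → Y} (hx : Function.Injective x) :
    IsOpenOmegaCover (taggedMeets 𝒰 x) := by
  have hω : ∀ F : Set Y, F.Finite → ∃ W ∈ taggedMeets 𝒰 x, F ⊆ W := by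
    intro F hF
    obtain ⟨n, hn⟩ := (infinite_univ.sdiff (hF.preimage hx.injOn)).nonempty
    choose u hu hFu using fun i => (h𝒰 i).2.2.2 F hF
    refine ⟨_, ⟨n, u, fun i _ => hu i, rfl⟩, fun y hy => ⟨?_, ?_⟩⟩
    · exact mem_iInter₂.2 fun i _ => hFu i hy
    · rintro rfl; exact hn.2 hy
  refine ⟨?_, eq_univ_of_forall fun y => ?_, ?_, hω⟩
  · rintro _ ⟨n, u, hu, rfl⟩
    exact ((finite_Iic n).isOpen_biInter fun i hi => (h𝒰 i).1 _ (hu i hi)).sdiff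
      isClosed_singleton
  · obtain ⟨W, hW, hyW⟩ := hω {y} (finite_singleton y)
    exact ⟨W, hW, hyW rfl⟩
  · rintro _ ⟨n, u, -, rfl⟩ h
    exact ((eq_univ_iff_forall.1 h) (x n)).2 rfl

end Covers

section OmegaGamma

variable {Y : Type*} [TopologicalSpace Y]

lemma S1OmegaGamma.exists_gammaCover_subset (h : S1OmegaGamma Y) {𝒰 : Set (Set Y)}
    (h𝒰 : IsOpenOmegaCover 𝒰) : ∃ 𝒱 ⊆ 𝒰, IsGammaCover 𝒱 := by
  obtain ⟨U, hU, hγ⟩ := h (fun _ => 𝒰) fun _ => h𝒰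
  exact ⟨range U, range_subset_iff.2 hU, hγ⟩

theorem s1OmegaGamma_of_forall_exists_gammaCover_subset [T1Space Y]
    (h : ∀ 𝒰 : Set (Set Y), IsOpenOmegaCover 𝒰 → ∃ 𝒱 ⊆ 𝒰, IsGammaCover 𝒱) :
    S1OmegaGamma Y := by
  intro 𝒰 h𝒰
  have : Infinite Y := (h𝒰 0).2.infinite
  let x := Infinite.natEmbedding Y
  obtain ⟨𝒱, h𝒱, hγ⟩ := h _ (isOpenOmegaCover_taggedMeets h𝒰 x.injective)
  choose! tag u hu hrep using fun V (hV : V ∈ 𝒱) => h𝒱 hV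
  have hmiss : ∀ V ∈ 𝒱, x (tag V) ∉ V := fun V hV hx => ((hrep V hV).subset hx).2 rfl
  have hunbdd : ∀ m, ∃ V ∈ 𝒱, m ≤ tag V := fun m => by
    -- a member tagged below `m` misses one of `x 0, …, x (m - 1)`
    have hfew := hγ.finite_setOf_not_subset ((finite_Iio m).image x)
    obtain ⟨V, hV, hmV⟩ := (hγ.1.sdiff hfew).nonempty
    exact ⟨V, hV, not_lt.1 fun hlt => hmV ⟨hV, fun hsub => hmiss V hV (hsub ⟨_, hlt, rfl⟩)⟩⟩
  choose K hK𝒱 hKle using hunbdd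
  have hKu : ∀ m, K m ⊆ u (K m) m := fun m y hy =>
    mem_iInter₂.1 ((hrep _ (hK𝒱 m)).subset hy).1 m (hKle m)
  refine ⟨fun m => u (K m) m, fun m => hu _ (hK𝒱 m) m (hKle m),
    isGammaCover_range (fun y => ?_) fun m => (h𝒰 m).2.2.1 _ (hu _ (hK𝒱 m) m (hKle m))⟩
  rw [← Nat.cofinite_eq_atTop, eventually_cofinite]
  refine ((hγ.2.2 y).preimage' (f := K) fun V _ => (finite_Iic (tag V)).subset ?_).subset ?_
  · rintro m rfl
    exact hKle m
  · exact fun m hm => ⟨hK𝒱 m, fun hy => hm (hKu m hy)⟩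

end OmegaGamma

/-- For a set of reals, `S1(Ω,Γ)` is equivalent to `Ω → (Γ)²₂`. -/
theorem s1OmegaGamma_iff_ramsey (X : Set ℝ) :
    S1OmegaGamma X ↔ OmegaRamseyGamma22 X := by
  constructor
  · intro h 𝒰 h𝒰 c
    obtain ⟨𝒢, h𝒢𝒰, h𝒢⟩ := h.exists_gammaCover_subset h𝒰
    obtain ⟨j, 𝒱, h𝒱𝒢, h𝒱, hc⟩ := h𝒢.1.exists_infinite_homogeneous_pairs c
    exact ⟨j, 𝒱, h𝒱𝒢.trans h𝒢𝒰, h𝒢.mono h𝒱𝒢 h𝒱, hc⟩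
  · intro h
    refine s1OmegaGamma_of_forall_exists_gammaCover_subset fun 𝒰 h𝒰 => ?_
    obtain ⟨-, 𝒱, h𝒱𝒰, h𝒱, -⟩ := h 𝒰 h𝒰 fun _ => 0
    exact ⟨𝒱, h𝒱𝒰, h𝒱⟩
end
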